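/- arXiv:1502.08053 — 9 statements merged into one kernel-verified Lean document; each statement's English description precedes it below -/
import Mathlib

section
/- The duality gap equals a sum of per-coordinate residual terms: P(w) − D(α) = (1/n)·∑_{i=1}^n [ φ_i*(−α_i) − φ_i*(φ_i′(A_iᵀw)) + (A_iᵀw)·κ_i ], where κ_i = α_i + φ_i′(A_iᵀw). -/
open scoped BigOperators InnerProductSpace

lemma tangent_le {f f' : ℝ → ℝ} (hc : ConvexOn ℝ Set.univ f)
    (hd : ∀ x, HasDerivAt f (f' x) x) (x y : ℝ) :
    f x + f' x * (y - x) ≤ f y := by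
  rcases lt_trichotomy x y with h | h | h
  · have := hc.le_slope_of_hasDerivAt (Set.mem_univ x) (Set.mem_univ y) h (hd x)
    rw [slope_def_field] at this
    have hyx : 0 < y - x := by linarith
    have := (le_div_iff₀ hyx).mp this
    nlinarith
  · simp [h]
  · have := hc.slope_le_of_hasDerivAt (Set.mem_univ y) (Set.mem_univ x) h (hd x)
    rw [slope_def_field] at this
    have hxy : 0 < x - y := by linarith
    have := (div_le_iff₀ hxy).mp this
    nlinarith

lemma fenchel_eq {f f' : ℝ → ℝ} (hc : ConvexOn ℝ Set.univ f)
    (hd : ∀ x, HasDerivAt f (f' x) x) {fs : ℝ → ℝ}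
    (hfs : ∀ u, IsLUB (Set.range fun x : ℝ => x * u - f x) (fs u)) (x : ℝ) :
    fs (f' x) = x * f' x - f x := by
  have h := hfs (f' x)
  apply le_antisymm
  · apply h.2
    rintro _ ⟨y, rfl⟩
    have := tangent_le hc hd x y
    show y * f' x - f y ≤ x * f' x - f x
    nlinarith
  · exact h.1 ⟨x, rfl⟩

/-- The duality gap equals a sum of per-coordinate residual terms:
`P(w) − D(α) = (1/n)∑ᵢ [φᵢ*(−αᵢ) − φᵢ*(φᵢ′(Aᵢᵀw)) + (Aᵢᵀw)·κᵢ]`,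
where `κᵢ = αᵢ + φᵢ′(Aᵢᵀw)` and `w` attains the supremum defining `g*(ᾱ)`,
`ᾱ = (1/(λn))∑ᵢ αᵢAᵢ`. -/
theorem stmt5 (n d : ℕ) (hn : 1 ≤ n) (hd : 1 ≤ d)
    (A : Fin n → EuclideanSpace ℝ (Fin d))
    (lam : ℝ) (hlam : 0 < lam)
    (g : EuclideanSpace ℝ (Fin d) → ℝ)
    (φ φ' : Fin n → ℝ → ℝ)
    (hφconv : ∀ i, ConvexOn ℝ Set.univ (φ i))
    (hφdiff : ∀ i x, HasDerivAt (φ i) (φ' i x) x)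
    (φs : Fin n → ℝ → ℝ)
    (hφs : ∀ i u, IsLUB (Set.range fun x : ℝ => x * u - φ i x) (φs i u))
    (gs : EuclideanSpace ℝ (Fin d) → ℝ)
    (hgs : ∀ z, IsLUB (Set.range fun s : EuclideanSpace ℝ (Fin d) => ⟪s, z⟫_ℝ - g s) (gs z))
    (P : EuclideanSpace ℝ (Fin d) → ℝ)
    (hP : ∀ u, P u = (1 / (n : ℝ)) * ∑ i, φ i ⟪A i, u⟫_ℝ + lam * g u)
    (D : (Fin n → ℝ) → ℝ)
    (hD : ∀ β : Fin n → ℝ,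
      D β = -lam * gs ((1 / (lam * n)) • (∑ i, β i • A i)) - (1 / (n : ℝ)) * ∑ i, φs i (-β i))
    (α : Fin n → ℝ)
    (abar : EuclideanSpace ℝ (Fin d))
    (habar : abar = (1 / (lam * n)) • (∑ i, α i • A i))
    (w : EuclideanSpace ℝ (Fin d))
    (hattain : g w + gs abar = ⟪w, abar⟫_ℝ)
    (κ : Fin n → ℝ) (hκ : ∀ i, κ i = α i + φ' i ⟪A i, w⟫_ℝ) :
    P w - D α = (1 / (n : ℝ)) *
      ∑ i, (φs i (-α i) - φs i (φ' i ⟪A i, w⟫_ℝ) + ⟪A i, w⟫_ℝ * κ i) := by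
  have hn0 : (0 : ℝ) < n := by exact_mod_cast hn
  have hinner : ⟪w, abar⟫_ℝ = (1 / (lam * n)) * ∑ i, α i * ⟪A i, w⟫_ℝ := by
    rw [habar, real_inner_smul_right, inner_sum]
    congr 1
    refine Finset.sum_congr rfl fun i _ => ?_
    rw [real_inner_smul_right, real_inner_comm]
  have hfen : ∀ i, φs i (φ' i ⟪A i, w⟫_ℝ) = ⟪A i, w⟫_ℝ * φ' i ⟪A i, w⟫_ℝ - φ i ⟪A i, w⟫_ℝ :=
    fun i => fenchel_eq (hφconv i) (hφdiff i) (hφs i) _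
  have key : lam * g w + lam * gs abar = (1 / (n : ℝ)) * ∑ i, α i * ⟪A i, w⟫_ℝ := by
    have h2 : lam * (1 / (lam * n)) = 1 / (n : ℝ) := by
      field_simp
    calc lam * g w + lam * gs abar = lam * (1 / (lam * n)) * ∑ i, α i * ⟪A i, w⟫_ℝ := by
          rw [← mul_add, hattain, hinner]; ring
      _ = (1 / (n : ℝ)) * ∑ i, α i * ⟪A i, w⟫_ℝ := by rw [h2]
  rw [hP, hD, ← habar]
  have : ∀ i, φs i (-α i) - φs i (φ' i ⟪A i, w⟫_ℝ) + ⟪A i, w⟫_ℝ * κ i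
      = φs i (-α i) + φ i ⟪A i, w⟫_ℝ + α i * ⟪A i, w⟫_ℝ := by
    intro i
    rw [hfen i, hκ i]; ring
  rw [Finset.sum_congr rfl fun i _ => this i]
  rw [Finset.sum_add_distrib, Finset.sum_add_distrib, mul_add, mul_add]
  linarith
end

section
/- Per-coordinate dual ascent bound: fix i ∈ {1,…,n} and let Δ_i ∈ ℝ maximize the one-dimensional subproblem Δ ↦ −φ_i*(−(α_i + Δ)) − (A_iᵀw)·Δ − (v_i/(2λn))·Δ². Then for every s ∈ [0,1]: D(α + Δ_i e_i) − D(α) ≥ (s/n)·[φ_i*(−α_i) − φ_i*(φ_i′(A_iᵀw)) + (A_iᵀw)·κ_i] − (s²·v_i·κ_i²)/(2λn²) + (γ·s(1−s)·κ_i²)/(2n), where e_i is the i-th standard basis vector and κ_i = α_i + φ_i′(A_iᵀw). -/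
open scoped InnerProductSpace

/-!
Smoothness of `φᵢ` (derivative 1/γ-Lipschitz) makes `φᵢ*` γ-strongly convex, and the 1-Lipschitz
gradient of `g*` gives the descent bound `g*(ᾱ + h) ≤ g*(ᾱ) + ⟪w, h⟫ + ‖h‖²/2`. By the descent
bound, `n (D(α + Δᵢeᵢ) − D(α))` is at least `φᵢ*(−αᵢ)` plus the one-dimensional objective at `Δᵢ`,
which by optimality dominates its value at `Δ = −sκᵢ`. Since
`−(αᵢ − sκᵢ) = (1 − s)(−αᵢ) + s φᵢ′(Aᵢᵀw)`, strong convexity of `φᵢ*` between these two points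
gives the bound.
-/

theorem Fintype.sum_apply_update_sub {ι R M : Type*} [Fintype ι] [DecidableEq ι] [AddCommGroup M]
    (F : ι → R → M) (α : ι → R) (i : ι) (a : R) :
    ∑ j, F j (Function.update α i a j) - ∑ j, F j (α j) = F i a - F i (α i) := by
  simp_rw [Function.apply_update F]
  rw [Finset.sum_update_of_mem (Finset.mem_univ i), ← Finset.add_sum_erase _ _ (Finset.mem_univ i),
    Finset.sdiff_singleton_eq_erase]
  abel

theorem image_add_le_of_abs_deriv_sub_le {f f' : ℝ → ℝ} {K : ℝ}
    (hf : ∀ x, HasDerivAt f (f' x) x) (hK : ∀ a b, |f' a - f' b| ≤ K * |a - b|) (x a : ℝ) :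
    f (x + a) ≤ f x + f' x * a + K / 2 * a ^ 2 := by
  let g : ℝ → ℝ := fun t => f (x + t * a) - f' x * a * t - K / 2 * a ^ 2 * t ^ 2
  have hg : ∀ t, HasDerivAt g ((f' (x + t * a) - f' x) * a - K * t * a ^ 2) t := by
    intro t
    have hline : HasDerivAt (fun t : ℝ => x + t * a) a t := by
      simpa using ((hasDerivAt_id t).mul_const a).const_add x
    refine ((((hf _).comp t hline).sub ((hasDerivAt_id t).const_mul (f' x * a))).sub
      ((hasDerivAt_pow 2 t).const_mul (K / 2 * a ^ 2))).congr_deriv ?_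
    norm_num
    ring
  have hanti : AntitoneOn g (Set.Icc 0 1) := by
    refine antitoneOn_of_hasDerivWithinAt_nonpos (convex_Icc 0 1)
      (HasDerivAt.continuousOn fun t _ => hg t) (fun t _ => (hg t).hasDerivWithinAt) ?_
    intro t ht
    rw [interior_Icc] at ht
    have hlip : |f' (x + t * a) - f' x| ≤ K * (t * |a|) := by
      simpa [abs_mul, abs_of_pos ht.1] using hK (x + t * a) x
    calc (f' (x + t * a) - f' x) * a - K * t * a ^ 2
        ≤ |f' (x + t * a) - f' x| * |a| - K * t * a ^ 2 := by
          rw [← abs_mul]; gcongr; exact le_abs_self _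
      _ ≤ K * (t * |a|) * |a| - K * t * a ^ 2 := by gcongr
      _ = 0 := by rw [← sq_abs a]; ring
  have := hanti (by norm_num : (0:ℝ) ∈ Set.Icc 0 1) (by norm_num : (1:ℝ) ∈ Set.Icc 0 1) zero_le_one
  simp only [g, one_mul, zero_mul, add_zero, mul_one, mul_zero, sub_zero, one_pow] at this
  linarith

theorem image_add_le_of_lipschitzWith_gradient {E : Type*} [NormedAddCommGroup E]
    [InnerProductSpace ℝ E] [CompleteSpace E] {f : E → ℝ} {f' : E → E} {L : NNReal}
    (hf : ∀ x, HasGradientAt f (f' x) x) (hL : LipschitzWith L f') (x h : E) :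
    f (x + h) ≤ f x + ⟪f' x, h⟫_ℝ + L * ‖h‖ ^ 2 / 2 := by
  have hline : ∀ t : ℝ, HasDerivAt (fun t : ℝ => f (x + t • h)) ⟪f' (x + t • h), h⟫_ℝ t := by
    intro t
    have := (hf (x + t • h)).hasFDerivAt.comp_hasDerivAt t
      (((hasDerivAt_id t).smul_const h).const_add x)
    simp only [one_smul] at this
    exact this
  have hlip : ∀ a b : ℝ,
      |⟪f' (x + a • h), h⟫_ℝ - ⟪f' (x + b • h), h⟫_ℝ| ≤ L * ‖h‖ ^ 2 * |a - b| := by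
    intro a b
    calc |⟪f' (x + a • h), h⟫_ℝ - ⟪f' (x + b • h), h⟫_ℝ|
        = |⟪f' (x + a • h) - f' (x + b • h), h⟫_ℝ| := by rw [inner_sub_left]
      _ ≤ ‖f' (x + a • h) - f' (x + b • h)‖ * ‖h‖ := abs_real_inner_le_norm _ _
      _ ≤ L * ‖(a - b) • h‖ * ‖h‖ := by
          gcongr
          simpa [dist_eq_norm, sub_smul] using hL.dist_le_mul (x + a • h) (x + b • h)
      _ = L * ‖h‖ ^ 2 * |a - b| := by rw [norm_smul, Real.norm_eq_abs]; ring
  simpa using image_add_le_of_abs_deriv_sub_le hline hlip 0 1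

theorem strongConvexOn_conjugate_of_abs_deriv_sub_le {f f' fs : ℝ → ℝ} {γ : ℝ} (hγ : 0 < γ)
    (hf : ∀ x, HasDerivAt f (f' x) x) (hf' : ∀ a b, |f' a - f' b| ≤ (1 / γ) * |a - b|)
    (hfs : ∀ u, IsLUB (Set.range fun x => x * u - f x) (fs u)) :
    StrongConvexOn Set.univ γ fs := by
  refine ⟨convex_univ, fun p _ q _ s t hs ht hst => ?_⟩
  obtain rfl : t = 1 - s := by linarith
  simp only [smul_eq_mul, Real.norm_eq_abs, sq_abs]
  refine (hfs _).2 ?_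
  rintro _ ⟨x, rfl⟩
  -- the two shifts are weighted so that the first-order terms `f' x * _` cancel
  set a := γ * (1 - s) * (p - q)
  set b := -(γ * s * (p - q))
  have hp : (x + a) * p - f (x + a) ≤ fs p := (hfs p).1 ⟨x + a, rfl⟩
  have hq : (x + b) * q - f (x + b) ≤ fs q := (hfs q).1 ⟨x + b, rfl⟩
  have ha := image_add_le_of_abs_deriv_sub_le hf hf' x a
  have hb := image_add_le_of_abs_deriv_sub_le hf hf' x b
  have hsq : s * (1 / γ / 2 * a ^ 2) + (1 - s) * (1 / γ / 2 * b ^ 2)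
      = s * (1 - s) * (γ / 2 * (p - q) ^ 2) := by
    simp only [a, b]; field_simp; ring
  linear_combination s * ha + (1 - s) * hb + s * hp + (1 - s) * hq + hsq

theorem stmt7_general (n d : ℕ)
    (A : Fin n → EuclideanSpace ℝ (Fin d))
    (v : Fin n → ℝ) (hv : ∀ i, v i = ‖A i‖ ^ 2)
    (lam gam : ℝ) (hlam : 0 < lam) (hgam : 0 < gam)
    (φ φ' : Fin n → ℝ → ℝ)
    (hφdiff : ∀ i x, HasDerivAt (φ i) (φ' i x) x)
    (hφlip : ∀ i, ∀ a b : ℝ, |φ' i a - φ' i b| ≤ (1 / gam) * |a - b|)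
    (φs : Fin n → ℝ → ℝ)
    (hφs : ∀ i u, IsLUB (Set.range fun x : ℝ => x * u - φ i x) (φs i u))
    (gs : EuclideanSpace ℝ (Fin d) → ℝ)
    (gs' : EuclideanSpace ℝ (Fin d) → EuclideanSpace ℝ (Fin d))
    (hgs' : ∀ z, HasGradientAt gs (gs' z) z)
    (hgs'lip : LipschitzWith 1 gs')
    (D : (Fin n → ℝ) → ℝ)
    (hD : ∀ β : Fin n → ℝ,
      D β = -lam * gs ((1 / (lam * n)) • (∑ i, β i • A i)) - (1 / (n : ℝ)) * ∑ i, φs i (-β i))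
    (α : Fin n → ℝ)
    (abar : EuclideanSpace ℝ (Fin d))
    (habar : abar = (1 / (lam * n)) • (∑ i, α i • A i))
    (w : EuclideanSpace ℝ (Fin d)) (hw : w = gs' abar)
    (κ : Fin n → ℝ) (hκ : ∀ i, κ i = α i + φ' i ⟪A i, w⟫_ℝ)
    (i : Fin n) (Δi : ℝ)
    (hΔi : ∀ Δ : ℝ,
      -φs i (-(α i + Δ)) - ⟪A i, w⟫_ℝ * Δ - v i / (2 * lam * n) * Δ ^ 2 ≤
      -φs i (-(α i + Δi)) - ⟪A i, w⟫_ℝ * Δi - v i / (2 * lam * n) * Δi ^ 2)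
    (s : ℝ) (hs0 : 0 ≤ s) (hs1 : s ≤ 1) :
    D (Function.update α i (α i + Δi)) - D α ≥
      (s / n) * (φs i (-α i) - φs i (φ' i ⟪A i, w⟫_ℝ) + ⟪A i, w⟫_ℝ * κ i)
        - s ^ 2 * v i * κ i ^ 2 / (2 * lam * (n : ℝ) ^ 2)
        + gam * s * (1 - s) * κ i ^ 2 / (2 * n) := by
  have hn : (0 : ℝ) < n := Nat.cast_pos.mpr i.pos
  have hshift : (1 / (lam * n)) • ∑ j, Function.update α i (α i + Δi) j • A j
      = abar + (Δi / (lam * n)) • A i := by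
    have := Fintype.sum_apply_update_sub (fun j x => x • A j) α i (α i + Δi)
    rw [habar, ← sub_eq_iff_eq_add', ← smul_sub, this, ← sub_smul, smul_smul, add_sub_cancel_left,
      one_div_mul_eq_div]
  have hincr : D (Function.update α i (α i + Δi)) - D α
      = -lam * (gs (abar + (Δi / (lam * n)) • A i) - gs abar)
        - (1 / n) * (φs i (-(α i + Δi)) - φs i (-α i)) := by
    rw [hD, hD, hshift, ← habar]
    linear_combination
      (-1 / (n : ℝ)) * Fintype.sum_apply_update_sub (fun j x => φs j (-x)) α i (α i + Δi)
  have hdescent :=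
    image_add_le_of_lipschitzWith_gradient hgs' hgs'lip abar ((Δi / (lam * n)) • A i)
  rw [← hw, real_inner_smul_right, real_inner_comm, norm_smul, mul_pow, Real.norm_eq_abs, sq_abs,
    ← hv, NNReal.coe_one] at hdescent
  have hconj := (strongConvexOn_conjugate_of_abs_deriv_sub_le hgam (hφdiff i) (hφlip i)
    (hφs i)).2 (Set.mem_univ (-α i)) (Set.mem_univ (φ' i ⟪A i, w⟫_ℝ)) (sub_nonneg.2 hs1) hs0
    (sub_add_cancel 1 s)
  simp only [smul_eq_mul, Real.norm_eq_abs, sq_abs] at hconj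
  rw [show (1 - s) * -α i + s * φ' i ⟪A i, w⟫_ℝ = -(α i + -(s * κ i)) by rw [hκ]; ring,
    show -α i - φ' i ⟪A i, w⟫_ℝ = -κ i by rw [hκ]; ring] at hconj
  have hopt := hΔi (-(s * κ i))
  rw [ge_iff_le, hincr]
  linear_combination (norm := (field_simp; ring_nf; rfl))
    lam * hdescent + (1 / (n : ℝ)) * hopt + (1 / (n : ℝ)) * hconj

/-- Per-coordinate dual ascent bound: fix `i` and let `Δᵢ` maximize the
one-dimensional subproblem `Δ ↦ −φᵢ*(−(αᵢ+Δ)) − (Aᵢᵀw)Δ − (vᵢ/(2λn))Δ²`. Then for every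
`s ∈ [0,1]`:
`D(α + Δᵢeᵢ) − D(α) ≥ (s/n)[φᵢ*(−αᵢ) − φᵢ*(φᵢ′(Aᵢᵀw)) + (Aᵢᵀw)κᵢ]
  − s²vᵢκᵢ²/(2λn²) + γs(1−s)κᵢ²/(2n)`,
where `κᵢ = αᵢ + φᵢ′(Aᵢᵀw)`. -/
theorem stmt7 (n d : ℕ) (hn : 1 ≤ n) (hd : 1 ≤ d)
    (A : Fin n → EuclideanSpace ℝ (Fin d))
    (v : Fin n → ℝ) (hv : ∀ i, v i = ‖A i‖ ^ 2)
    (lam gam : ℝ) (hlam : 0 < lam) (hgam : 0 < gam)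
    (g : EuclideanSpace ℝ (Fin d) → ℝ)
    (hg : ∀ w₁ w₂ : EuclideanSpace ℝ (Fin d), ∀ a : ℝ, 0 ≤ a → a ≤ 1 →
      g (a • w₁ + (1 - a) • w₂) ≤ a * g w₁ + (1 - a) * g w₂ - a * (1 - a) / 2 * ‖w₁ - w₂‖ ^ 2)
    (φ φ' : Fin n → ℝ → ℝ)
    (hφconv : ∀ i, ConvexOn ℝ Set.univ (φ i))
    (hφdiff : ∀ i x, HasDerivAt (φ i) (φ' i x) x)
    (hφlip : ∀ i, ∀ a b : ℝ, |φ' i a - φ' i b| ≤ (1 / gam) * |a - b|)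
    (φs : Fin n → ℝ → ℝ)
    (hφs : ∀ i u, IsLUB (Set.range fun x : ℝ => x * u - φ i x) (φs i u))
    (gs : EuclideanSpace ℝ (Fin d) → ℝ)
    (hgs : ∀ z, IsLUB (Set.range fun s : EuclideanSpace ℝ (Fin d) => ⟪s, z⟫_ℝ - g s) (gs z))
    (gs' : EuclideanSpace ℝ (Fin d) → EuclideanSpace ℝ (Fin d))
    (hgs' : ∀ z, HasGradientAt gs (gs' z) z)
    (hgs'lip : LipschitzWith 1 gs')
    (D : (Fin n → ℝ) → ℝ)
    (hD : ∀ β : Fin n → ℝ,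
      D β = -lam * gs ((1 / (lam * n)) • (∑ i, β i • A i)) - (1 / (n : ℝ)) * ∑ i, φs i (-β i))
    (α : Fin n → ℝ)
    (abar : EuclideanSpace ℝ (Fin d))
    (habar : abar = (1 / (lam * n)) • (∑ i, α i • A i))
    (w : EuclideanSpace ℝ (Fin d)) (hw : w = gs' abar)
    (hattain : g w + gs abar = ⟪w, abar⟫_ℝ)
    (κ : Fin n → ℝ) (hκ : ∀ i, κ i = α i + φ' i ⟪A i, w⟫_ℝ)
    (i : Fin n) (Δi : ℝ)
    (hΔi : ∀ Δ : ℝ,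
      -φs i (-(α i + Δ)) - ⟪A i, w⟫_ℝ * Δ - v i / (2 * lam * n) * Δ ^ 2 ≤
      -φs i (-(α i + Δi)) - ⟪A i, w⟫_ℝ * Δi - v i / (2 * lam * n) * Δi ^ 2)
    (s : ℝ) (hs0 : 0 ≤ s) (hs1 : s ≤ 1) :
    D (Function.update α i (α i + Δi)) - D α ≥
      (s / n) * (φs i (-α i) - φs i (φ' i ⟪A i, w⟫_ℝ) + ⟪A i, w⟫_ℝ * κ i)
        - s ^ 2 * v i * κ i ^ 2 / (2 * lam * (n : ℝ) ^ 2)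
        + gam * s * (1 - s) * κ i ^ 2 / (2 * n) :=
  stmt7_general n d A v hv lam gam hlam hgam φ φ' hφdiff hφlip φs hφs gs gs' hgs' hgs'lip D hD α
    abar habar w hw κ hκ i Δi hΔi s hs0 hs1
end

section
/- (Lemma 1 of the paper.) Let p ∈ ℝⁿ be a probability vector coherent with the dual residue κ (i.e. p_i > 0 whenever κ_i ≠ 0), and let 0 ≤ θ ≤ min_{i ∈ I} p_i where I = {i : κ_i ≠ 0}. For each i let Δ_i ∈ ℝ maximize Δ ↦ −φ_i*(−(α_i + Δ)) − (A_iᵀw)·Δ − (v_i/(2λn))·Δ². Then the expected dual ascent satisfies ∑_{i=1}^n p_i·(D(α + Δ_i e_i) − D(α)) − θ·(P(w) − D(α)) ≥ −(θ/(2λn²))·∑_{i ∈ I} ( θ(v_i + nλγ)/p_i − nλγ )·κ_i². -/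
open scoped BigOperators InnerProductSpace
open Set

/-! Along coordinate `i`, the quadratic upper model of `g*` (whose gradient is 1-Lipschitz) shows
that the dual gain of the step `Δᵢ` is at least `1/n` times the maximum of the one-dimensional
objective. Testing that objective at `Δ = -s κᵢ` and using that `φᵢ*` is `γ`-strongly convex (as
the conjugate of a function with `1/γ`-Lipschitz derivative) bounds it below by `s` times the
Fenchel–Young gap `φᵢ(Aᵢᵀw) + φᵢ*(-αᵢ) + αᵢ Aᵢᵀw` plus a quadratic in `κᵢ`. Choosing `s = θ/pᵢ`,
averaging over `p`, and using `P(w) - D(α) = (1/n) ∑ᵢ` (Fenchel–Young gaps) gives the bound. -/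

theorem ConvexOn.add_deriv_mul_sub_le {f : ℝ → ℝ} {f' x : ℝ} (hf : ConvexOn ℝ univ f)
    (hd : HasDerivAt f f' x) (y : ℝ) : f x + f' * (y - x) ≤ f y := by
  rcases lt_trichotomy x y with hxy | rfl | hxy
  · have := hf.le_slope_of_hasDerivAt (mem_univ x) (mem_univ y) hxy hd
    rw [slope_def_field, le_div_iff₀ (sub_pos.2 hxy)] at this
    linarith
  · simp
  · have := hf.slope_le_of_hasDerivAt (mem_univ y) (mem_univ x) hxy hd
    rw [slope_def_field, div_le_iff₀ (sub_pos.2 hxy)] at this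
    linarith

theorem le_add_deriv_mul_sub_add_sq {f f' : ℝ → ℝ} {L : ℝ} (hd : ∀ x, HasDerivAt f (f' x) x)
    (hlip : ∀ a b, |f' a - f' b| ≤ L * |a - b|) (x y : ℝ) :
    f y ≤ f x + f' x * (y - x) + L / 2 * (y - x) ^ 2 := by
  have hk : ∀ t, HasDerivAt (fun t => L / 2 * t ^ 2 - f t) (L * t - f' t) t := fun t => by
    refine (((hasDerivAt_pow 2 t).const_mul (L / 2)).sub (hd t)).congr_deriv ?_
    push_cast
    ring
  have hconv : ConvexOn ℝ univ fun t => L / 2 * t ^ 2 - f t := by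
    refine Monotone.convexOn_univ_of_deriv (fun t => (hk t).differentiableAt) fun s t hst => ?_
    have hst' := (le_abs_self _).trans (hlip t s)
    rw [abs_of_nonneg (sub_nonneg.2 hst)] at hst'
    rw [(hk s).deriv, (hk t).deriv]
    linarith
  linear_combination hconv.add_deriv_mul_sub_le (hk x) y

theorem le_add_inner_mul_add_sq {E : Type*} [NormedAddCommGroup E] [InnerProductSpace ℝ E]
    [CompleteSpace E] {f : E → ℝ} {f' : E → E} {K : NNReal}
    (hf : ∀ z, HasGradientAt f (f' z) z) (hlip : LipschitzWith K f') (z h : E) (c : ℝ) :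
    f (z + c • h) ≤ f z + ⟪f' z, h⟫_ℝ * c + K * ‖h‖ ^ 2 / 2 * c ^ 2 := by
  have hd : ∀ t : ℝ, HasDerivAt (fun t => f (z + t • h)) ⟪f' (z + t • h), h⟫_ℝ t := fun t => by
    have hline : HasDerivAt (fun t : ℝ => z + t • h) h t := by
      simpa using ((hasDerivAt_id t).smul_const h).const_add z
    simpa [Function.comp_def] using (hf (z + t • h)).hasFDerivAt.comp_hasDerivAt t hline
  have hlip' : ∀ a b : ℝ, |⟪f' (z + a • h), h⟫_ℝ - ⟪f' (z + b • h), h⟫_ℝ| ≤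
      K * ‖h‖ ^ 2 * |a - b| := fun a b => by
    rw [← inner_sub_left]
    calc |⟪f' (z + a • h) - f' (z + b • h), h⟫_ℝ|
        ≤ ‖f' (z + a • h) - f' (z + b • h)‖ * ‖h‖ := abs_real_inner_le_norm _ _
      _ ≤ K * ‖(a - b) • h‖ * ‖h‖ := by
        gcongr
        have hab : z + a • h - (z + b • h) = (a - b) • h := by rw [sub_smul]; abel
        simpa [hab] using hlip.norm_sub_le (z + a • h) (z + b • h)
      _ = K * ‖h‖ ^ 2 * |a - b| := by rw [norm_smul, Real.norm_eq_abs]; ring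
  simpa using le_add_deriv_mul_sub_add_sq hd hlip' 0 c

def IsFenchelConjugate (f fs : ℝ → ℝ) : Prop :=
  ∀ u, IsLUB (range fun x : ℝ => x * u - f x) (fs u)

namespace IsFenchelConjugate

variable {f f' fs : ℝ → ℝ} {γ : ℝ}

theorem mul_sub_le (h : IsFenchelConjugate f fs) (x u : ℝ) : x * u - f x ≤ fs u :=
  (h u).1 ⟨x, rfl⟩

theorem apply_eq_of_hasDerivAt (h : IsFenchelConjugate f fs) (hf : ConvexOn ℝ univ f) {a d : ℝ}
    (hd : HasDerivAt f d a) : fs d = a * d - f a := by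
  refine le_antisymm ((h d).2 ?_) (h.mul_sub_le a d)
  rintro _ ⟨x, rfl⟩
  linear_combination hf.add_deriv_mul_sub_le hd x

theorem gap_eq_zero (h : IsFenchelConjugate f fs) (hf : ConvexOn ℝ univ f) {a d α : ℝ}
    (hd : HasDerivAt f d a) (hα : α + d = 0) : f a + fs (-α) + α * a = 0 := by
  rw [show -α = d by linarith, h.apply_eq_of_hasDerivAt hf hd]
  linear_combination a * hα

theorem add_sq_le (h : IsFenchelConjugate f fs) (hγ : 0 < γ) (hd : ∀ x, HasDerivAt f (f' x) x)
    (hlip : ∀ a b, |f' a - f' b| ≤ 1 / γ * |a - b|) (x u : ℝ) :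
    x * u - f x + γ / 2 * (u - f' x) ^ 2 ≤ fs u := by
  -- test the supremum at the point `y` where the quadratic upper model of `f` is tight
  set y := x + γ * (u - f' x)
  have hdesc := le_add_deriv_mul_sub_add_sq hd hlip x y
  have hyx : 1 / γ / 2 * (y - x) ^ 2 = γ / 2 * (u - f' x) ^ 2 := by
    simp only [y]; field_simp; ring
  rw [hyx] at hdesc
  linear_combination h.mul_sub_le y u + hdesc

theorem strongConvexOn (h : IsFenchelConjugate f fs) (hγ : 0 < γ)
    (hd : ∀ x, HasDerivAt f (f' x) x) (hlip : ∀ a b, |f' a - f' b| ≤ 1 / γ * |a - b|) :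
    StrongConvexOn univ γ fs := by
  refine ⟨convex_univ, fun u _ v _ a b ha hb hab => ?_⟩
  simp only [smul_eq_mul, Real.norm_eq_abs, sq_abs]
  refine (h _).2 ?_
  rintro _ ⟨x, rfl⟩
  obtain rfl : b = 1 - a := by linarith
  linarith [mul_le_mul_of_nonneg_left (h.add_sq_le hγ hd hlip x u) ha,
    mul_le_mul_of_nonneg_left (h.add_sq_le hγ hd hlip x v) hb,
    mul_nonneg hγ.le (sq_nonneg (a * (u - f' x) + (1 - a) * (v - f' x)))]

theorem mul_gap_add_sq_le (h : IsFenchelConjugate f fs) (hsc : StrongConvexOn univ γ fs)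
    (hf : ConvexOn ℝ univ f) {a d α s : ℝ} (hd : HasDerivAt f d a) (hs0 : 0 ≤ s) (hs1 : s ≤ 1) :
    s * (f a + fs (-α) + α * a) + γ / 2 * (s * (1 - s)) * (α + d) ^ 2 ≤
      fs (-α) - fs ((1 - s) * -α + s * d) + a * (s * (α + d)) := by
  have hconv := hsc.2 (mem_univ (-α)) (mem_univ d) (sub_nonneg.2 hs1) hs0 (by ring)
  simp only [smul_eq_mul, Real.norm_eq_abs, sq_abs, h.apply_eq_of_hasDerivAt hf hd] at hconv
  linear_combination hconv

end IsFenchelConjugate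

theorem Fintype.sum_apply_update {ι R M : Type*} [Fintype ι] [DecidableEq ι]
    [AddCommGroup M] (F : ι → R → M) (β : ι → R) (i : ι) (x : R) :
    ∑ j, F j (Function.update β i x j) = ∑ j, F j (β j) + (F i x - F i (β i)) := by
  rw [← sub_eq_iff_eq_add', ← Finset.sum_sub_distrib, Finset.sum_eq_single i]
  · simp
  · intro j _ hj
    simp [Function.update_of_ne hj]
  · simp

section Duality

variable {E : Type*} [NormedAddCommGroup E] [InnerProductSpace ℝ E] {n : ℕ}
  (A : Fin n → E) (lam : ℝ)

noncomputable def dualAvg (β : Fin n → ℝ) : E :=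
  (1 / (lam * n)) • ∑ i, β i • A i

noncomputable def dualObj (gs : E → ℝ) (φs : Fin n → ℝ → ℝ) (β : Fin n → ℝ) : ℝ :=
  -lam * gs (dualAvg A lam β) - (1 / (n : ℝ)) * ∑ i, φs i (-β i)

noncomputable def primalObj (φ : Fin n → ℝ → ℝ) (g : E → ℝ) (u : E) : ℝ :=
  (1 / (n : ℝ)) * ∑ i, φ i ⟪A i, u⟫_ℝ + lam * g u

variable {A lam}

theorem dualAvg_update (β : Fin n → ℝ) (i : Fin n) (δ : ℝ) :
    dualAvg A lam (Function.update β i (β i + δ)) = dualAvg A lam β + (δ / (lam * n)) • A i := by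
  simp only [dualAvg, Fintype.sum_apply_update (fun j t => t • A j), add_smul,
    add_sub_cancel_left, smul_add, smul_smul, one_div_mul_eq_div]

theorem dualObj_update_sub (gs : E → ℝ) (φs : Fin n → ℝ → ℝ) (β : Fin n → ℝ) (i : Fin n)
    (δ : ℝ) :
    dualObj A lam gs φs (Function.update β i (β i + δ)) - dualObj A lam gs φs β =
      -lam * (gs (dualAvg A lam β + (δ / (lam * n)) • A i) - gs (dualAvg A lam β)) -
        1 / (n : ℝ) * (φs i (-(β i + δ)) - φs i (-β i)) := by
  simp only [dualObj, dualAvg_update, Fintype.sum_apply_update (fun j t => φs j (-t))]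
  ring

theorem le_dualObj_update_sub [CompleteSpace E] (hlam : 0 < lam) {gs : E → ℝ} {gs' : E → E}
    (hgs' : ∀ z, HasGradientAt gs (gs' z) z) (hlip : LipschitzWith 1 gs')
    (φs : Fin n → ℝ → ℝ) (β : Fin n → ℝ) (i : Fin n) (δ : ℝ) :
    1 / (n : ℝ) * (φs i (-β i) - φs i (-(β i + δ)) - ⟪A i, gs' (dualAvg A lam β)⟫_ℝ * δ -
        ‖A i‖ ^ 2 / (2 * lam * n) * δ ^ 2) ≤
      dualObj A lam gs φs (Function.update β i (β i + δ)) - dualObj A lam gs φs β := by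
  have hn : (n : ℝ) ≠ 0 := Nat.cast_ne_zero.2 (Fin.pos i).ne'
  have hdesc := le_add_inner_mul_add_sq hgs' hlip (dualAvg A lam β) (A i) (δ / (lam * n))
  have hscale : lam * (⟪gs' (dualAvg A lam β), A i⟫_ℝ * (δ / (lam * n)) +
      ((1 : NNReal) : ℝ) * ‖A i‖ ^ 2 / 2 * (δ / (lam * n)) ^ 2) =
      1 / (n : ℝ) * (⟪A i, gs' (dualAvg A lam β)⟫_ℝ * δ + ‖A i‖ ^ 2 / (2 * lam * n) * δ ^ 2) := by
    rw [real_inner_comm]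
    field_simp
    push_cast
    ring
  rw [dualObj_update_sub]
  linear_combination lam * hdesc + hscale

theorem le_dualObj_update_sub_of_forall_le [CompleteSpace E] (hlam : 0 < lam) {gs : E → ℝ}
    {gs' : E → E} (hgs' : ∀ z, HasGradientAt gs (gs' z) z) (hlip : LipschitzWith 1 gs')
    {φ φs : Fin n → ℝ → ℝ} {α : Fin n → ℝ} {w : E} (hw : w = gs' (dualAvg A lam α)) {i : Fin n}
    {d δ γ s : ℝ} (hφs : IsFenchelConjugate (φ i) (φs i)) (hsc : StrongConvexOn univ γ (φs i))
    (hφ : ConvexOn ℝ univ (φ i)) (hd : HasDerivAt (φ i) d ⟪A i, w⟫_ℝ)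
    (hmax : ∀ δ', -φs i (-(α i + δ')) - ⟪A i, w⟫_ℝ * δ' - ‖A i‖ ^ 2 / (2 * lam * n) * δ' ^ 2 ≤
      -φs i (-(α i + δ)) - ⟪A i, w⟫_ℝ * δ - ‖A i‖ ^ 2 / (2 * lam * n) * δ ^ 2)
    (hs0 : 0 ≤ s) (hs1 : s ≤ 1) :
    1 / (n : ℝ) * (s * (φ i ⟪A i, w⟫_ℝ + φs i (-α i) + α i * ⟪A i, w⟫_ℝ) +
        (γ / 2 * (s * (1 - s)) - ‖A i‖ ^ 2 / (2 * lam * n) * s ^ 2) * (α i + d) ^ 2) ≤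
      dualObj A lam gs φs (Function.update α i (α i + δ)) - dualObj A lam gs φs α := by
  have hgain := hφs.mul_gap_add_sq_le hsc hφ hd (α := α i) hs0 hs1
  have htrial := hmax (-(s * (α i + d)))
  rw [show -(α i + -(s * (α i + d))) = (1 - s) * -α i + s * d by ring] at htrial
  calc _ ≤ 1 / (n : ℝ) * (φs i (-α i) - φs i (-(α i + δ)) - ⟪A i, w⟫_ℝ * δ -
        ‖A i‖ ^ 2 / (2 * lam * n) * δ ^ 2) := by gcongr; linarith
    _ ≤ _ := by simpa only [hw] using le_dualObj_update_sub hlam hgs' hlip φs α i δ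

theorem primalObj_sub_dualObj (hlam : lam ≠ 0) (φ φs : Fin n → ℝ → ℝ) {g gs : E → ℝ}
    {β : Fin n → ℝ} {w : E} (hattain : g w + gs (dualAvg A lam β) = ⟪w, dualAvg A lam β⟫_ℝ) :
    primalObj A lam φ g w - dualObj A lam gs φs β =
      1 / (n : ℝ) * ∑ i, (φ i ⟪A i, w⟫_ℝ + φs i (-β i) + β i * ⟪A i, w⟫_ℝ) := by
  have hinner : lam * ⟪w, dualAvg A lam β⟫_ℝ = 1 / (n : ℝ) * ∑ i, β i * ⟪A i, w⟫_ℝ := by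
    simp only [dualAvg, real_inner_smul_right, inner_sum, real_inner_comm w, ← mul_assoc, one_div,
      mul_inv, mul_inv_cancel₀ hlam, one_mul]
  simp only [primalObj, dualObj, Finset.sum_add_distrib]
  linear_combination lam * hattain + hinner

end Duality

theorem sub_le_mul_of_forall_step_le {n lam gam v p θ κ G inc : ℝ} (hn : n ≠ 0) (hlam : lam ≠ 0)
    (hθ : 0 ≤ θ) (hp : 0 ≤ p) (hcoh : κ ≠ 0 → 0 < p) (hθp : κ ≠ 0 → θ ≤ p)
    (hG : κ = 0 → G = 0)
    (hinc : ∀ s, 0 ≤ s → s ≤ 1 →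
      1 / n * (s * G + (gam / 2 * (s * (1 - s)) - v / (2 * lam * n) * s ^ 2) * κ ^ 2) ≤ inc) :
    θ / n * G - θ / (2 * lam * n ^ 2) * ((θ * (v + n * lam * gam) / p - n * lam * gam) * κ ^ 2) ≤
      p * inc := by
  rcases eq_or_ne κ 0 with hκ | hκ
  · have := hinc 0 le_rfl zero_le_one
    simp only [hG hκ, hκ] at this ⊢
    simpa using mul_nonneg hp (by simpa using this)
  · -- take the step `s = θ / p`
    have hp0 := hcoh hκ
    have hstep := mul_le_mul_of_nonneg_left
      (hinc (θ / p) (div_nonneg hθ hp) ((div_le_one hp0).2 (hθp hκ))) hp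
    refine (le_of_eq ?_).trans hstep
    field_simp
    ring

theorem stmt8_general (n d : ℕ)
    (A : Fin n → EuclideanSpace ℝ (Fin d))
    (v : Fin n → ℝ) (hv : ∀ i, v i = ‖A i‖ ^ 2)
    (lam gam : ℝ) (hlam : 0 < lam) (hgam : 0 < gam)
    (g : EuclideanSpace ℝ (Fin d) → ℝ)
    (φ φ' : Fin n → ℝ → ℝ)
    (hφconv : ∀ i, ConvexOn ℝ Set.univ (φ i))
    (hφdiff : ∀ i x, HasDerivAt (φ i) (φ' i x) x)
    (hφlip : ∀ i, ∀ a b : ℝ, |φ' i a - φ' i b| ≤ (1 / gam) * |a - b|)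
    (φs : Fin n → ℝ → ℝ)
    (hφs : ∀ i u, IsLUB (Set.range fun x : ℝ => x * u - φ i x) (φs i u))
    (gs : EuclideanSpace ℝ (Fin d) → ℝ)
    (gs' : EuclideanSpace ℝ (Fin d) → EuclideanSpace ℝ (Fin d))
    (hgs' : ∀ z, HasGradientAt gs (gs' z) z)
    (hgs'lip : LipschitzWith 1 gs')
    (P : EuclideanSpace ℝ (Fin d) → ℝ)
    (hP : ∀ u, P u = (1 / (n : ℝ)) * ∑ i, φ i ⟪A i, u⟫_ℝ + lam * g u)
    (D : (Fin n → ℝ) → ℝ)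
    (hD : ∀ β : Fin n → ℝ,
      D β = -lam * gs ((1 / (lam * n)) • (∑ i, β i • A i)) - (1 / (n : ℝ)) * ∑ i, φs i (-β i))
    (α : Fin n → ℝ)
    (abar : EuclideanSpace ℝ (Fin d))
    (habar : abar = (1 / (lam * n)) • (∑ i, α i • A i))
    (w : EuclideanSpace ℝ (Fin d)) (hw : w = gs' abar)
    (hattain : g w + gs abar = ⟪w, abar⟫_ℝ)
    (κ : Fin n → ℝ) (hκ : ∀ i, κ i = α i + φ' i ⟪A i, w⟫_ℝ)
    (Δ : Fin n → ℝ)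
    (hΔ : ∀ i, ∀ Δ' : ℝ,
      -φs i (-(α i + Δ')) - ⟪A i, w⟫_ℝ * Δ' - v i / (2 * lam * n) * Δ' ^ 2 ≤
      -φs i (-(α i + Δ i)) - ⟪A i, w⟫_ℝ * (Δ i) - v i / (2 * lam * n) * (Δ i) ^ 2)
    (p : Fin n → ℝ) (hp0 : ∀ i, 0 ≤ p i)
    (hcoh : ∀ i, κ i ≠ 0 → 0 < p i)
    (θ : ℝ) (hθ0 : 0 ≤ θ) (hθmin : ∀ i, κ i ≠ 0 → θ ≤ p i) :
    ∑ i, p i * (D (Function.update α i (α i + Δ i)) - D α) - θ * (P w - D α) ≥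
      -(θ / (2 * lam * (n : ℝ) ^ 2)) *
        ∑ i ∈ Finset.univ.filter (fun i => κ i ≠ 0),
          (θ * (v i + n * lam * gam) / p i - n * lam * gam) * κ i ^ 2 := by
  obtain rfl : D = dualObj A lam gs φs := funext hD
  obtain rfl : P = primalObj A lam φ g := funext hP
  obtain rfl : v = fun i => ‖A i‖ ^ 2 := funext hv
  obtain rfl : κ = fun i => α i + φ' i ⟪A i, w⟫_ℝ := funext hκ
  change abar = dualAvg A lam α at habar
  subst habar
  beta_reduce at hΔ hcoh hθmin ⊢
  replace hφs : ∀ i, IsFenchelConjugate (φ i) (φs i) := hφs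
  have hterm := fun i => sub_le_mul_of_forall_step_le (Nat.cast_ne_zero.2 (Fin.pos i).ne')
    hlam.ne' hθ0 (hp0 i) (hcoh i) (hθmin i)
    ((hφs i).gap_eq_zero (hφconv i) (hφdiff i _))
    fun s hs0 hs1 => le_dualObj_update_sub_of_forall_le hlam hgs' hgs'lip hw (hφs i)
      ((hφs i).strongConvexOn hgam (hφdiff i) (hφlip i)) (hφconv i) (hφdiff i _) (hΔ i) hs0 hs1
  have hsum := Finset.sum_le_sum fun i (_ : i ∈ Finset.univ) => hterm i
  rw [Finset.sum_sub_distrib, ← Finset.mul_sum, ← Finset.mul_sum] at hsum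
  rw [ge_iff_le, primalObj_sub_dualObj hlam.ne' φ φs (hw ▸ hattain),
    Finset.sum_filter_of_ne (p := fun i => α i + φ' i ⟪A i, w⟫_ℝ ≠ 0)
      fun i _ h hκ0 => h (by rw [hκ0]; ring)]
  linear_combination hsum

/-- Lemma 1 of the paper: Let `p` be a probability vector coherent with the
dual residue `κ` (`pᵢ > 0` whenever `κᵢ ≠ 0`) and `0 ≤ θ ≤ min_{i∈I} pᵢ`, where
`I = {i : κᵢ ≠ 0}`. For each `i` let `Δᵢ` maximize
`Δ ↦ −φᵢ*(−(αᵢ+Δ)) − (Aᵢᵀw)Δ − (vᵢ/(2λn))Δ²`. Then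
`∑ᵢ pᵢ(D(α+Δᵢeᵢ) − D(α)) − θ(P(w) − D(α)) ≥
 −(θ/(2λn²))·∑_{i∈I} (θ(vᵢ+nλγ)/pᵢ − nλγ)κᵢ²`. -/
theorem stmt8 (n d : ℕ) (hn : 1 ≤ n) (hd : 1 ≤ d)
    (A : Fin n → EuclideanSpace ℝ (Fin d))
    (v : Fin n → ℝ) (hv : ∀ i, v i = ‖A i‖ ^ 2)
    (lam gam : ℝ) (hlam : 0 < lam) (hgam : 0 < gam)
    (g : EuclideanSpace ℝ (Fin d) → ℝ)
    (hg : ∀ w₁ w₂ : EuclideanSpace ℝ (Fin d), ∀ a : ℝ, 0 ≤ a → a ≤ 1 →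
      g (a • w₁ + (1 - a) • w₂) ≤ a * g w₁ + (1 - a) * g w₂ - a * (1 - a) / 2 * ‖w₁ - w₂‖ ^ 2)
    (φ φ' : Fin n → ℝ → ℝ)
    (hφconv : ∀ i, ConvexOn ℝ Set.univ (φ i))
    (hφdiff : ∀ i x, HasDerivAt (φ i) (φ' i x) x)
    (hφlip : ∀ i, ∀ a b : ℝ, |φ' i a - φ' i b| ≤ (1 / gam) * |a - b|)
    (φs : Fin n → ℝ → ℝ)
    (hφs : ∀ i u, IsLUB (Set.range fun x : ℝ => x * u - φ i x) (φs i u))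
    (gs : EuclideanSpace ℝ (Fin d) → ℝ)
    (hgs : ∀ z, IsLUB (Set.range fun s : EuclideanSpace ℝ (Fin d) => ⟪s, z⟫_ℝ - g s) (gs z))
    (gs' : EuclideanSpace ℝ (Fin d) → EuclideanSpace ℝ (Fin d))
    (hgs' : ∀ z, HasGradientAt gs (gs' z) z)
    (hgs'lip : LipschitzWith 1 gs')
    (P : EuclideanSpace ℝ (Fin d) → ℝ)
    (hP : ∀ u, P u = (1 / (n : ℝ)) * ∑ i, φ i ⟪A i, u⟫_ℝ + lam * g u)
    (D : (Fin n → ℝ) → ℝ)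
    (hD : ∀ β : Fin n → ℝ,
      D β = -lam * gs ((1 / (lam * n)) • (∑ i, β i • A i)) - (1 / (n : ℝ)) * ∑ i, φs i (-β i))
    (α : Fin n → ℝ)
    (abar : EuclideanSpace ℝ (Fin d))
    (habar : abar = (1 / (lam * n)) • (∑ i, α i • A i))
    (w : EuclideanSpace ℝ (Fin d)) (hw : w = gs' abar)
    (hattain : g w + gs abar = ⟪w, abar⟫_ℝ)
    (κ : Fin n → ℝ) (hκ : ∀ i, κ i = α i + φ' i ⟪A i, w⟫_ℝ)
    (Δ : Fin n → ℝ)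
    (hΔ : ∀ i, ∀ Δ' : ℝ,
      -φs i (-(α i + Δ')) - ⟪A i, w⟫_ℝ * Δ' - v i / (2 * lam * n) * Δ' ^ 2 ≤
      -φs i (-(α i + Δ i)) - ⟪A i, w⟫_ℝ * (Δ i) - v i / (2 * lam * n) * (Δ i) ^ 2)
    (p : Fin n → ℝ) (hp0 : ∀ i, 0 ≤ p i) (hp1 : ∑ i, p i = 1)
    (hcoh : ∀ i, κ i ≠ 0 → 0 < p i)
    (θ : ℝ) (hθ0 : 0 ≤ θ) (hθmin : ∀ i, κ i ≠ 0 → θ ≤ p i) :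
    ∑ i, p i * (D (Function.update α i (α i + Δ i)) - D α) - θ * (P w - D α) ≥
      -(θ / (2 * lam * (n : ℝ) ^ 2)) *
        ∑ i ∈ Finset.univ.filter (fun i => κ i ≠ 0),
          (θ * (v i + n * lam * gam) / p i - n * lam * gam) * κ i ^ 2 :=
  stmt8_general n d A v hv lam gam hlam hgam g φ φ' hφconv hφdiff hφlip φs hφs gs gs' hgs' hgs'lip P
    hP D hD α abar habar w hw hattain κ hκ Δ hΔ p hp0 hcoh θ hθ0 hθmin
end

section
/- (Deterministic core of Theorem 1 of the paper.) Let d* ∈ ℝ and let (d_t)_{t≥0}, (g_t)_{t≥0} be real sequences and (θ̃_t)_{t≥0} a sequence with θ̃_t ∈ (0, 1] for all t. Assume for every t ≥ 0: d_t ≤ d*, g_t ≥ d* − d_t, and d_{t+1} − d_t ≥ θ̃_t·g_t. Then for every t ≥ 0: (i) d* − d_t ≤ (∏_{k=0}^{t−1}(1 − θ̃_k))·(d* − d_0), and (ii) g_t ≤ (1/θ̃_t)·(∏_{k=0}^{t−1}(1 − θ̃_k))·(d* − d_0). -/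
/-!
The ascent condition together with `g_t ≥ d* − d_t` contracts the suboptimality `d* − d_t`
by the factor `1 − θ̃_t` in every step, which unrolls to (i). Since `d_{t+1} ≤ d*`, the same
ascent condition bounds `θ̃_t g_t` by the current suboptimality, and (ii) follows from (i).
-/

open Finset

theorem le_prod_range_mul_of_le_mul_succ {e c : ℕ → ℝ} (hc : ∀ t, 0 ≤ c t)
    (h : ∀ t, e (t + 1) ≤ c t * e t) (t : ℕ) : e t ≤ (∏ k ∈ range t, c k) * e 0 := by
  induction t with
  | zero => simp
  | succ n ih =>
    calc e (n + 1) ≤ c n * e n := h n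
      _ ≤ c n * ((∏ k ∈ range n, c k) * e 0) := mul_le_mul_of_nonneg_left ih (hc n)
      _ = (∏ k ∈ range (n + 1), c k) * e 0 := by rw [prod_range_succ]; ring

theorem sub_le_one_sub_mul_of_ascent {dstar d d' g θ : ℝ} (hθ : 0 ≤ θ)
    (hg : dstar - d ≤ g) (hascent : θ * g ≤ d' - d) :
    dstar - d' ≤ (1 - θ) * (dstar - d) := by
  nlinarith [mul_le_mul_of_nonneg_left hg hθ]

theorem le_one_div_mul_of_ascent {dstar d d' g θ : ℝ} (hθ : 0 < θ)
    (hd' : d' ≤ dstar) (hascent : θ * g ≤ d' - d) :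
    g ≤ 1 / θ * (dstar - d) := by
  rw [one_div_mul_eq_div, le_div_iff₀' hθ]
  linarith

/-- deterministic core of Theorem 1: Let `d* ∈ ℝ`, `(d_t)`, `(g_t)` real
sequences and `(θ̃_t)` with `θ̃_t ∈ (0,1]`. If for all `t`: `d_t ≤ d*`, `g_t ≥ d* − d_t`
and `d_{t+1} − d_t ≥ θ̃_t g_t`, then for every `t`:
(i) `d* − d_t ≤ (∏_{k=0}^{t−1}(1−θ̃_k))(d* − d_0)` and
(ii) `g_t ≤ (1/θ̃_t)(∏_{k=0}^{t−1}(1−θ̃_k))(d* − d_0)`. -/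
theorem stmt10 (dstar : ℝ) (dseq gseq θ : ℕ → ℝ)
    (hθ : ∀ t, θ t ∈ Set.Ioc (0 : ℝ) 1)
    (hd : ∀ t, dseq t ≤ dstar)
    (hg : ∀ t, gseq t ≥ dstar - dseq t)
    (hascent : ∀ t, dseq (t + 1) - dseq t ≥ θ t * gseq t) :
    ∀ t : ℕ,
      dstar - dseq t ≤ (∏ k ∈ Finset.range t, (1 - θ k)) * (dstar - dseq 0) ∧
      gseq t ≤ (1 / θ t) * (∏ k ∈ Finset.range t, (1 - θ k)) * (dstar - dseq 0) := by
  have suboptimality (t : ℕ) :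
      dstar - dseq t ≤ (∏ k ∈ range t, (1 - θ k)) * (dstar - dseq 0) :=
    le_prod_range_mul_of_le_mul_succ (e := fun k => dstar - dseq k)
      (fun k => sub_nonneg.mpr (hθ k).2)
      (fun k => sub_le_one_sub_mul_of_ascent (hθ k).1.le (hg k) (hascent k)) t
  intro t
  refine ⟨suboptimality t, ?_⟩
  calc gseq t ≤ 1 / θ t * (dstar - dseq t) :=
        le_one_div_mul_of_ascent (hθ t).1 (hd (t + 1)) (hascent t)
    _ ≤ 1 / θ t * ((∏ k ∈ range t, (1 - θ k)) * (dstar - dseq 0)) :=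
        mul_le_mul_of_nonneg_left (suboptimality t) (one_div_nonneg.mpr (hθ t).1.le)
    _ = _ := (mul_assoc _ _ _).symm
end

section
/- (Deterministic core of Theorem 2 of the paper, the IProx-SDCA rate.) Let d* ∈ ℝ, θ* ∈ (0, 1], and let (d_t)_{t≥0}, (g_t)_{t≥0} be real sequences with, for every t ≥ 0: d_t ≤ d*, g_t ≥ d* − d_t, and d_{t+1} − d_t ≥ θ*·g_t. Then for every t ≥ 0: g_t ≤ (1/θ*)·(1 − θ*)ᵗ·(d* − d_0). -/
open scoped BigOperators

/-- deterministic core of Theorem 2, the IProx-SDCA rate: Let `d* ∈ ℝ`,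
`θ* ∈ (0,1]`, and `(d_t)`, `(g_t)` real sequences with, for every `t`: `d_t ≤ d*`,
`g_t ≥ d* − d_t` and `d_{t+1} − d_t ≥ θ* g_t`. Then for every `t`:
`g_t ≤ (1/θ*)(1 − θ*)ᵗ(d* − d_0)`. -/
theorem stmt11 (dstar θstar : ℝ) (hθ : θstar ∈ Set.Ioc (0 : ℝ) 1)
    (dseq gseq : ℕ → ℝ)
    (hd : ∀ t, dseq t ≤ dstar)
    (hg : ∀ t, gseq t ≥ dstar - dseq t)
    (hascent : ∀ t, dseq (t + 1) - dseq t ≥ θstar * gseq t) :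
    ∀ t : ℕ, gseq t ≤ (1 / θstar) * (1 - θstar) ^ t * (dstar - dseq 0) := by
  obtain ⟨hθ0, hθ1⟩ := hθ
  have key : ∀ t : ℕ, dstar - dseq t ≤ (1 - θstar) ^ t * (dstar - dseq 0) := by
    intro t
    induction t with
    | zero => simp
    | succ n ih =>
        have h1 : dstar - dseq (n + 1) ≤ (1 - θstar) * (dstar - dseq n) := by
          have := hascent n
          have := hg n
          nlinarith
        calc dstar - dseq (n + 1) ≤ (1 - θstar) * (dstar - dseq n) := h1
          _ ≤ (1 - θstar) * ((1 - θstar) ^ n * (dstar - dseq 0)) := by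
              apply mul_le_mul_of_nonneg_left ih (by linarith)
          _ = (1 - θstar) ^ (n + 1) * (dstar - dseq 0) := by ring
  intro t
  have h2 : θstar * gseq t ≤ dseq (t + 1) - dseq t := hascent t
  have h3 : dseq (t + 1) - dseq t ≤ dstar - dseq t := by have := hd (t + 1); linarith
  have h4 : θstar * gseq t ≤ (1 - θstar) ^ t * (dstar - dseq 0) := le_trans (le_trans h2 h3) (key t)
  rw [div_mul_eq_mul_div, div_mul_eq_mul_div, le_div_iff₀ hθ0]
  nlinarith
end

section
/- The importance sampling distribution is feasible for the adaptive-probability program and attains the rate θ*: let κ ∈ ℝⁿ with κ ≠ 0 and I = {i : κ_i ≠ 0}, let v_i ≥ 0, λ > 0, γ > 0, n ≥ 1, and define p*_i = (v_i + nλγ)/∑_{j=1}^n(v_j + nλγ) and θ(κ, p) = nλγ·(∑_{i∈I} κ_i²)/(∑_{i∈I} κ_i²(v_i + nλγ)/p_i). Then θ(κ, p*) = θ* where θ* = nλγ/∑_{j=1}^n(v_j + nλγ), and θ* ≤ min_{i∈I} p*_i. -/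
open Finset

/- With `w i = vᵢ + nλγ` and `S = ∑ⱼ wⱼ`, sampling proportionally to `w` makes every term
`κᵢ² wᵢ / p*ᵢ` of the denominator of `θ(κ, p*)` equal to `κᵢ² S`, so the sums of `κᵢ²` cancel and
`θ(κ, p*) = nλγ / S = θ*`. Feasibility is `nλγ ≤ vᵢ + nλγ`, divided by `S > 0`. -/

theorem sum_mul_div_div_const {ι : Type*} (s : Finset ι) (a w : ι → ℝ) (S : ℝ)
    (hw : ∀ i ∈ s, w i ≠ 0) :
    ∑ i ∈ s, a i * w i / (w i / S) = (∑ i ∈ s, a i) * S := by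
  rw [sum_mul]
  refine sum_congr rfl fun i hi => ?_
  rw [mul_div_assoc, div_div_cancel₀ (hw i hi)]

theorem rate_of_proportional_sampling {ι : Type*} (s : Finset ι) (q w : ι → ℝ) (c S : ℝ)
    (hq : ∑ i ∈ s, q i ≠ 0) (hw : ∀ i ∈ s, w i ≠ 0) :
    c * (∑ i ∈ s, q i) / ∑ i ∈ s, q i * w i / (w i / S) = c / S := by
  rw [sum_mul_div_div_const s q w S hw, mul_comm _ S, mul_div_mul_right c S hq]

theorem sum_sq_filter_ne_zero_pos {ι : Type*} [Fintype ι] {κ : ι → ℝ} (hκ : κ ≠ 0) :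
    0 < ∑ i ∈ univ.filter (fun i => κ i ≠ 0), κ i ^ 2 := by
  obtain ⟨i, hi⟩ := Function.ne_iff.mp hκ
  exact sum_pos (fun j hj => pow_two_pos_of_ne_zero (mem_filter.mp hj).2)
    ⟨i, mem_filter.mpr ⟨mem_univ i, hi⟩⟩

theorem stmt12_general (n : ℕ)
    (v : Fin n → ℝ) (hv : ∀ i, 0 ≤ v i)
    (lam gam : ℝ) (hlam : 0 < lam) (hgam : 0 < gam)
    (κ : Fin n → ℝ) (hκ : κ ≠ 0)
    (pstar : Fin n → ℝ)
    (hpstar : ∀ i, pstar i = (v i + n * lam * gam) / ∑ j, (v j + n * lam * gam))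
    (θstar : ℝ) (hθstar : θstar = (n : ℝ) * lam * gam / ∑ j, (v j + n * lam * gam)) :
    ((n : ℝ) * lam * gam *
        (∑ i ∈ Finset.univ.filter (fun i => κ i ≠ 0), κ i ^ 2) /
        (∑ i ∈ Finset.univ.filter (fun i => κ i ≠ 0),
          κ i ^ 2 * (v i + n * lam * gam) / pstar i)) = θstar ∧
      (∀ i, κ i ≠ 0 → θstar ≤ pstar i) := by
  obtain ⟨i₀, -⟩ := Function.ne_iff.mp hκ
  have hn : (0 : ℝ) < n := Nat.cast_pos.mpr i₀.pos
  have hw : ∀ i, 0 < v i + n * lam * gam := fun i => by have := hv i; positivity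
  have hS : 0 < ∑ j, (v j + n * lam * gam) := sum_pos (fun j _ => hw j) ⟨i₀, mem_univ _⟩
  obtain rfl : pstar = fun i => (v i + n * lam * gam) / ∑ j, (v j + n * lam * gam) :=
    funext hpstar
  subst hθstar
  refine ⟨rate_of_proportional_sampling _ _ _ _ _ (sum_sq_filter_ne_zero_pos hκ).ne'
    fun i _ => (hw i).ne', fun i _ => ?_⟩
  exact div_le_div_of_nonneg_right (le_add_of_nonneg_left (hv i)) hS.le

/-- The importance sampling distribution is feasible for the
adaptive-probability program and attains the rate `θ*`: with
`p*ᵢ = (vᵢ+nλγ)/∑ⱼ(vⱼ+nλγ)` and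
`θ(κ,p) = nλγ(∑_{i∈I}κᵢ²)/(∑_{i∈I}κᵢ²(vᵢ+nλγ)/pᵢ)` for `I = {i : κᵢ ≠ 0}`, one has
`θ(κ,p*) = θ*` and `θ* ≤ min_{i∈I} p*ᵢ`, where `θ* = nλγ/∑ⱼ(vⱼ+nλγ)`. -/
theorem stmt12 (n : ℕ) (hn : 1 ≤ n)
    (v : Fin n → ℝ) (hv : ∀ i, 0 ≤ v i)
    (lam gam : ℝ) (hlam : 0 < lam) (hgam : 0 < gam)
    (κ : Fin n → ℝ) (hκ : κ ≠ 0)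
    (pstar : Fin n → ℝ)
    (hpstar : ∀ i, pstar i = (v i + n * lam * gam) / ∑ j, (v j + n * lam * gam))
    (θstar : ℝ) (hθstar : θstar = (n : ℝ) * lam * gam / ∑ j, (v j + n * lam * gam)) :
    ((n : ℝ) * lam * gam *
        (∑ i ∈ Finset.univ.filter (fun i => κ i ≠ 0), κ i ^ 2) /
        (∑ i ∈ Finset.univ.filter (fun i => κ i ≠ 0),
          κ i ^ 2 * (v i + n * lam * gam) / pstar i)) = θstar ∧
      (∀ i, κ i ≠ 0 → θstar ≤ pstar i) :=
  stmt12_general n v hv lam gam hlam hgam κ hκ pstar hpstar θstar hθstar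
end

section
/- (Lemma 2 of the paper.) Fix n ≥ 1, λ > 0, γ > 0, nonnegative reals v_1, …, v_n, and κ ∈ ℝⁿ with κ ≠ 0; let I = {i : κ_i ≠ 0}. The probability vector p*(κ) given by p*(κ)_i = |κ_i|·√(v_i + nλγ) / ∑_{j=1}^n |κ_j|·√(v_j + nλγ) maximizes θ(κ, ·) over the probability simplex: for every p ∈ ℝⁿ with p_i ≥ 0, ∑_{i=1}^n p_i = 1 and p_i > 0 for all i ∈ I, one has θ(κ, p) ≤ θ(κ, p*(κ)). -/
/-!
Writing `fᵢ = |κᵢ|√(vᵢ + nλγ)`, the denominator of `θ(κ, p)` is `∑_{i∈I} fᵢ² / pᵢ`. By the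
Cauchy–Schwarz inequality in Sedrakyan's form it is at least `(∑_{i∈I} fᵢ)² / ∑_{i∈I} pᵢ
≥ (∑_{i∈I} fᵢ)²`, and `p*(κ) = f / ∑ f` attains this bound.
-/

open Finset

section SedrakyanBound

variable {ι : Type*} {s : Finset ι} {f p : ι → ℝ}

theorem Finset.sq_sum_le_sum_sq_div_of_sum_le_one (hp : ∀ i ∈ s, 0 < p i)
    (hs : ∑ i ∈ s, p i ≤ 1) : (∑ i ∈ s, f i) ^ 2 ≤ ∑ i ∈ s, f i ^ 2 / p i := by
  rcases s.eq_empty_or_nonempty with rfl | hne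
  · simp
  calc (∑ i ∈ s, f i) ^ 2 = (∑ i ∈ s, f i) ^ 2 / 1 := (div_one _).symm
    _ ≤ (∑ i ∈ s, f i) ^ 2 / ∑ i ∈ s, p i :=
      div_le_div_of_nonneg_left (sq_nonneg _) (sum_pos hp hne) hs
    _ ≤ ∑ i ∈ s, f i ^ 2 / p i := sq_sum_div_le_sum_sq_div s f hp

theorem Finset.sum_sq_div_div_sum_self (hf : ∀ i ∈ s, f i ≠ 0) :
    ∑ i ∈ s, f i ^ 2 / (f i / ∑ j ∈ s, f j) = (∑ i ∈ s, f i) ^ 2 := by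
  have hterm : ∀ i ∈ s, f i ^ 2 / (f i / ∑ j ∈ s, f j) = f i * ∑ j ∈ s, f j := by
    intro i hi
    rw [div_div_eq_mul_div, sq, mul_assoc, mul_div_assoc, mul_div_cancel_left₀ _ (hf i hi)]
  rw [sum_congr rfl hterm, ← sum_mul, sq]

end SedrakyanBound

theorem stmt15_general (n : ℕ)
    (v : Fin n → ℝ) (hv : ∀ i, 0 ≤ v i)
    (lam gam : ℝ) (hlam : 0 < lam) (hgam : 0 < gam)
    (κ : Fin n → ℝ) (hκ : κ ≠ 0)
    (θ : (Fin n → ℝ) → ℝ)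
    (hθ : ∀ p : Fin n → ℝ, θ p = (n : ℝ) * lam * gam *
        (∑ i ∈ Finset.univ.filter (fun i => κ i ≠ 0), κ i ^ 2) /
        (∑ i ∈ Finset.univ.filter (fun i => κ i ≠ 0),
          κ i ^ 2 * (v i + n * lam * gam) / p i))
    (pstar : Fin n → ℝ)
    (hpstar : ∀ i, pstar i = |κ i| * Real.sqrt (v i + n * lam * gam) /
        ∑ j, |κ j| * Real.sqrt (v j + n * lam * gam))
    (p : Fin n → ℝ) (hp0 : ∀ i, 0 ≤ p i) (hp1 : ∑ i, p i = 1)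
    (hpos : ∀ i, κ i ≠ 0 → 0 < p i) :
    θ p ≤ θ pstar := by
  set I := univ.filter (fun i => κ i ≠ 0)
  set f : Fin n → ℝ := fun i => |κ i| * Real.sqrt (v i + n * lam * gam) with hf
  obtain ⟨i₀, hi₀⟩ : ∃ i, κ i ≠ 0 := Function.ne_iff.mp hκ
  have hi₀I : i₀ ∈ I := mem_filter.mpr ⟨mem_univ _, hi₀⟩
  have hc : 0 < (n : ℝ) * lam * gam := by have := i₀.pos; positivity
  have hf_sq : ∀ i, f i ^ 2 = κ i ^ 2 * (v i + n * lam * gam) := fun i => by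
    rw [hf, mul_pow, sq_abs, Real.sq_sqrt (by linarith [hv i])]
  have hf_pos : ∀ i ∈ I, 0 < f i := fun i hi =>
    mul_pos (abs_pos.mpr (mem_filter.mp hi).2) (Real.sqrt_pos.mpr (by linarith [hv i]))
  have hsum_f : ∑ j, f j = ∑ i ∈ I, f i :=
    (sum_filter_of_ne fun i _ hfi => by contrapose! hfi; simp [hf, hfi]).symm
  have hD_pstar : ∑ i ∈ I, κ i ^ 2 * (v i + n * lam * gam) / pstar i = (∑ i ∈ I, f i) ^ 2 := by
    rw [← sum_sq_div_div_sum_self fun i hi => (hf_pos i hi).ne']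
    refine sum_congr rfl fun i _ => ?_
    rw [hpstar i, ← hf_sq i, ← hsum_f]
  have hD_p : (∑ i ∈ I, f i) ^ 2 ≤ ∑ i ∈ I, κ i ^ 2 * (v i + n * lam * gam) / p i := by
    simp_rw [← hf_sq]
    refine sq_sum_le_sum_sq_div_of_sum_le_one (fun i hi => hpos i (mem_filter.mp hi).2) ?_
    exact hp1 ▸ sum_le_sum_of_subset_of_nonneg (subset_univ I) fun i _ _ => hp0 i
  have hS_pos : 0 < (∑ i ∈ I, f i) ^ 2 :=
    pow_pos (sum_pos' (fun i hi => (hf_pos i hi).le) ⟨i₀, hi₀I, hf_pos i₀ hi₀I⟩) 2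
  rw [hθ, hθ, hD_pstar]
  exact div_le_div_of_nonneg_left (by positivity) hS_pos hD_p

/-- Lemma 2 of the paper: The probability vector
`p*(κ)ᵢ = |κᵢ|√(vᵢ+nλγ)/∑ⱼ|κⱼ|√(vⱼ+nλγ)` maximizes `θ(κ,·)` over the probability
simplex: for every probability vector `p` positive on `I = {i : κᵢ ≠ 0}`,
`θ(κ,p) ≤ θ(κ,p*(κ))`, where
`θ(κ,p) = nλγ(∑_{i∈I}κᵢ²)/(∑_{i∈I}κᵢ²(vᵢ+nλγ)/pᵢ)`. -/
theorem stmt15 (n : ℕ) (hn : 1 ≤ n)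
    (v : Fin n → ℝ) (hv : ∀ i, 0 ≤ v i)
    (lam gam : ℝ) (hlam : 0 < lam) (hgam : 0 < gam)
    (κ : Fin n → ℝ) (hκ : κ ≠ 0)
    (θ : (Fin n → ℝ) → ℝ)
    (hθ : ∀ p : Fin n → ℝ, θ p = (n : ℝ) * lam * gam *
        (∑ i ∈ Finset.univ.filter (fun i => κ i ≠ 0), κ i ^ 2) /
        (∑ i ∈ Finset.univ.filter (fun i => κ i ≠ 0),
          κ i ^ 2 * (v i + n * lam * gam) / p i))
    (pstar : Fin n → ℝ)
    (hpstar : ∀ i, pstar i = |κ i| * Real.sqrt (v i + n * lam * gam) /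
        ∑ j, |κ j| * Real.sqrt (v j + n * lam * gam))
    (p : Fin n → ℝ) (hp0 : ∀ i, 0 ≤ p i) (hp1 : ∑ i, p i = 1)
    (hpos : ∀ i, κ i ≠ 0 → 0 < p i) :
    θ p ≤ θ pstar :=
  stmt15_general n v hv lam gam hlam hgam κ hκ θ hθ pstar hpstar p hp0 hp1 hpos
end

section
/- (Core of Corollary 2.) The closed-form adaptive probability beats importance sampling: for every κ ∈ ℝⁿ with κ ≠ 0, nλγ·(∑_{i=1}^n κ_i²) / (∑_{i=1}^n |κ_i|·√(v_i + nλγ))² ≥ nλγ / ∑_{j=1}^n (v_j + nλγ); equivalently θ(κ, p*(κ)) ≥ θ*, where p*(κ)_i = |κ_i|√(v_i + nλγ)/∑_j |κ_j|√(v_j + nλγ). -/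
/-! Cauchy–Schwarz applied to the vectors `(|κᵢ|)` and `(√(vᵢ + nλγ))` gives
`(∑ᵢ |κᵢ| √(vᵢ + nλγ))² ≤ (∑ᵢ κᵢ²) ∑ⱼ (vⱼ + nλγ)`, which is the first inequality after
clearing denominators. At `p = p*` every term of the denominator of `θ` becomes
`|κᵢ| √(vᵢ + nλγ) · ∑ⱼ |κⱼ| √(vⱼ + nλγ)`, so `θ(κ, p*)` is exactly the left-hand side. -/

open Finset

variable {ι : Type*} (s : Finset ι) (a w : ι → ℝ)

theorem sq_sum_abs_mul_sqrt_le (hw : ∀ i ∈ s, 0 ≤ w i) :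
    (∑ i ∈ s, |a i| * √(w i)) ^ 2 ≤ (∑ i ∈ s, a i ^ 2) * ∑ i ∈ s, w i := by
  calc (∑ i ∈ s, |a i| * √(w i)) ^ 2
      ≤ (∑ i ∈ s, |a i| ^ 2) * ∑ i ∈ s, √(w i) ^ 2 := sum_mul_sq_le_sq_mul_sq s _ _
    _ = (∑ i ∈ s, a i ^ 2) * ∑ i ∈ s, w i := by
        congr 1
        · exact sum_congr rfl fun i _ => sq_abs _
        · exact sum_congr rfl fun i hi => Real.sq_sqrt (hw i hi)

theorem div_sum_le_mul_sum_sq_div_sq_sum_abs_mul_sqrt {c : ℝ} (hc : 0 ≤ c)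
    (hw : ∀ i ∈ s, 0 ≤ w i) (hS : 0 < ∑ i ∈ s, |a i| * √(w i)) :
    c / ∑ i ∈ s, w i ≤ c * (∑ i ∈ s, a i ^ 2) / (∑ i ∈ s, |a i| * √(w i)) ^ 2 := by
  have hCS := sq_sum_abs_mul_sqrt_le s a w hw
  have hT : 0 < ∑ i ∈ s, w i :=
    pos_of_mul_pos_right ((pow_pos hS 2).trans_le hCS) (sum_nonneg fun i _ => sq_nonneg (a i))
  rw [div_le_div_iff₀ hT (pow_pos hS 2), mul_assoc]
  exact mul_le_mul_of_nonneg_left hCS hc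

theorem sum_sq_mul_div_abs_mul_sqrt_div (S : ℝ) (hS : S ≠ 0)
    (ha : ∀ i ∈ s, a i ≠ 0) (hw : ∀ i ∈ s, 0 < w i) :
    ∑ i ∈ s, a i ^ 2 * w i / (|a i| * √(w i) / S) = S * ∑ i ∈ s, |a i| * √(w i) := by
  rw [mul_sum]
  refine sum_congr rfl fun i hi => ?_
  have hai : |a i| ≠ 0 := abs_ne_zero.mpr (ha i hi)
  have hwi : √(w i) ≠ 0 := (Real.sqrt_pos.mpr (hw i hi)).ne'
  have hsq : a i ^ 2 * w i = (|a i| * √(w i)) ^ 2 := by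
    rw [mul_pow, sq_abs, Real.sq_sqrt (hw i hi).le]
  rw [hsq]
  field_simp

theorem stmt16_general (n : ℕ)
    (v : Fin n → ℝ) (hv : ∀ i, 0 ≤ v i)
    (lam gam : ℝ) (hlam : 0 < lam) (hgam : 0 < gam)
    (κ : Fin n → ℝ) (hκ : κ ≠ 0)
    (θ : (Fin n → ℝ) → ℝ)
    (hθ : ∀ p : Fin n → ℝ, θ p = (n : ℝ) * lam * gam *
        (∑ i ∈ Finset.univ.filter (fun i => κ i ≠ 0), κ i ^ 2) /
        (∑ i ∈ Finset.univ.filter (fun i => κ i ≠ 0),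
          κ i ^ 2 * (v i + n * lam * gam) / p i))
    (pstar : Fin n → ℝ)
    (hpstar : ∀ i, pstar i = |κ i| * Real.sqrt (v i + n * lam * gam) /
        ∑ j, |κ j| * Real.sqrt (v j + n * lam * gam))
    (θstar : ℝ) (hθstar : θstar = (n : ℝ) * lam * gam / ∑ j, (v j + n * lam * gam)) :
    ((n : ℝ) * lam * gam * (∑ i, κ i ^ 2) /
        (∑ i, |κ i| * Real.sqrt (v i + n * lam * gam)) ^ 2 ≥ θstar) ∧
      θ pstar ≥ θstar := by
  obtain ⟨i₀, hi₀⟩ : ∃ i, κ i ≠ 0 := Function.ne_iff.mp hκ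
  have hc : 0 < (n : ℝ) * lam * gam :=
    mul_pos (mul_pos (Nat.cast_pos.mpr (Fin.pos i₀)) hlam) hgam
  have hw : ∀ i, 0 < v i + n * lam * gam := fun i => add_pos_of_nonneg_of_pos (hv i) hc
  have hS : 0 < ∑ i, |κ i| * √(v i + n * lam * gam) :=
    sum_pos' (fun i _ => by positivity)
      ⟨i₀, mem_univ _, mul_pos (abs_pos.mpr hi₀) (Real.sqrt_pos.mpr (hw i₀))⟩
  have hfirst := div_sum_le_mul_sum_sq_div_sq_sum_abs_mul_sqrt univ κ _ hc.le
    (fun i _ => (hw i).le) hS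
  refine ⟨hθstar ▸ hfirst, ?_⟩
  have hsupport {f : Fin n → ℝ} (hf : ∀ i, κ i = 0 → f i = 0) :
      ∑ i ∈ univ.filter (fun i => κ i ≠ 0), f i = ∑ i, f i :=
    sum_filter_of_ne fun i _ hfi hκi => hfi (hf i hκi)
  have hden : ∑ i ∈ univ.filter (fun i => κ i ≠ 0), κ i ^ 2 * (v i + n * lam * gam) / pstar i =
      (∑ i, |κ i| * √(v i + n * lam * gam)) ^ 2 := by
    simp_rw [hpstar]
    rw [sum_sq_mul_div_abs_mul_sqrt_div _ κ _ _ hS.ne' (fun i hi => (mem_filter.mp hi).2)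
      (fun i _ => hw i), hsupport fun i h => by simp [h], sq]
  rw [hθ, hden, hsupport fun i h => by simp [h]]
  exact hθstar ▸ hfirst

/-- core of Corollary 2: The closed-form adaptive probability beats
importance sampling: for every `κ ∈ ℝⁿ` with `κ ≠ 0`,
`nλγ(∑ᵢκᵢ²)/(∑ᵢ|κᵢ|√(vᵢ+nλγ))² ≥ nλγ/∑ⱼ(vⱼ+nλγ)`; equivalently
`θ(κ,p*(κ)) ≥ θ*` for `p*(κ)ᵢ = |κᵢ|√(vᵢ+nλγ)/∑ⱼ|κⱼ|√(vⱼ+nλγ)`, where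
`θ(κ,p) = nλγ(∑_{i∈I}κᵢ²)/(∑_{i∈I}κᵢ²(vᵢ+nλγ)/pᵢ)` and `I = {i : κᵢ ≠ 0}`. -/
theorem stmt16 (n : ℕ) (hn : 1 ≤ n)
    (v : Fin n → ℝ) (hv : ∀ i, 0 ≤ v i)
    (lam gam : ℝ) (hlam : 0 < lam) (hgam : 0 < gam)
    (κ : Fin n → ℝ) (hκ : κ ≠ 0)
    (θ : (Fin n → ℝ) → ℝ)
    (hθ : ∀ p : Fin n → ℝ, θ p = (n : ℝ) * lam * gam *
        (∑ i ∈ Finset.univ.filter (fun i => κ i ≠ 0), κ i ^ 2) /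
        (∑ i ∈ Finset.univ.filter (fun i => κ i ≠ 0),
          κ i ^ 2 * (v i + n * lam * gam) / p i))
    (pstar : Fin n → ℝ)
    (hpstar : ∀ i, pstar i = |κ i| * Real.sqrt (v i + n * lam * gam) /
        ∑ j, |κ j| * Real.sqrt (v j + n * lam * gam))
    (θstar : ℝ) (hθstar : θstar = (n : ℝ) * lam * gam / ∑ j, (v j + n * lam * gam)) :
    ((n : ℝ) * lam * gam * (∑ i, κ i ^ 2) /
        (∑ i, |κ i| * Real.sqrt (v i + n * lam * gam)) ^ 2 ≥ θstar) ∧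
      θ pstar ≥ θstar :=
  stmt16_general n v hv lam gam hlam hgam κ hκ θ hθ pstar hpstar θstar hθstar
end

section
/- (Lemma 3 of the paper.) Suppose every loss is quadratic: φ_i(x) = (1/(2γ))(x − y_i)² for given y_i ∈ ℝ. Let p ∈ ℝⁿ be a probability vector with p_i > 0 for every i ∈ I = {i : κ_i ≠ 0}, and for each i let Δ_i ∈ ℝ maximize Δ ↦ −φ_i*(−(α_i + Δ)) − (A_iᵀw)·Δ − (v_i/(2λn))·Δ². Then for EVERY θ ∈ [0, ∞) (no upper restriction by min_{i∈I} p_i): ∑_{i=1}^n p_i·(D(α + Δ_i e_i) − D(α)) − θ·(P(w) − D(α)) ≥ −(θ/(2λn²))·∑_{i ∈ I} ( θ(v_i + nλγ)/p_i − nλγ )·κ_i². -/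
open scoped BigOperators InnerProductSpace
open Filter Topology Function Finset

/-!
Since `w` attains the supremum defining `g*(ᾱ)` and `g` is `1`-strongly convex, `w` minimizes
`s ↦ g s - ⟪s, ᾱ⟫` with quadratic growth, which makes `g*` `1`-smooth at `ᾱ` with slope `w`.
Hence moving `αᵢ` by `δ` raises `D` by at least `1/n` times the coordinate objective that `Δᵢ`
maximizes. For quadratic losses this objective at the trial step `δ = -s κᵢ` equals
`κᵢ² (γ s - (γ/2 + vᵢ/(2λn)) s²)`, and the duality gap is `(γ/(2n)) ∑ κᵢ²`. Taking `s = θ/pᵢ`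
for `i ∈ I` and summing with weights `pᵢ` gives the bound.
-/

section StrongConvexity

variable {E : Type*} [NormedAddCommGroup E] [InnerProductSpace ℝ E]

theorem StrongConvexOn.add_sq_norm_sub_le_of_isMinOn {s : Set E} {m : ℝ} {f : E → ℝ}
    (hf : StrongConvexOn s m f) {w x : E} (hw : w ∈ s) (hx : x ∈ s) (hmin : IsMinOn f s w) :
    f w + m / 2 * ‖x - w‖ ^ 2 ≤ f x := by
  have hchord : ∀ a ∈ Set.Ioo (0 : ℝ) 1, f w + (1 - a) * (m / 2 * ‖x - w‖ ^ 2) ≤ f x := by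
    rintro a ⟨ha0, ha1⟩
    have hconv := hf.2 hx hw ha0.le (sub_nonneg.2 ha1.le) (add_sub_cancel a 1)
    have hle : f w ≤ f (a • x + (1 - a) • w) :=
      hmin (hf.1 hx hw ha0.le (sub_nonneg.2 ha1.le) (add_sub_cancel a 1))
    simp only [smul_eq_mul] at hconv
    refine le_of_mul_le_mul_left ?_ ha0
    linear_combination hle + hconv
  have hlim : Tendsto (fun a : ℝ => f w + (1 - a) * (m / 2 * ‖x - w‖ ^ 2)) (𝓝[>] 0)
      (𝓝 (f w + (1 - 0) * (m / 2 * ‖x - w‖ ^ 2))) :=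
    tendsto_nhdsWithin_of_tendsto_nhds (Continuous.tendsto (by fun_prop) 0)
  simpa using le_of_tendsto hlim (eventually_of_mem (Ioo_mem_nhdsGT one_pos) hchord)

theorem StrongConvexOn.sub_inner {s : Set E} {m : ℝ} {g : E → ℝ} (hg : StrongConvexOn s m g)
    (z : E) : StrongConvexOn s m fun x => g x - ⟪x, z⟫_ℝ := by
  refine ⟨hg.1, fun x hx y hy a b ha hb hab => ?_⟩
  have := hg.2 hx hy ha hb hab
  simp only [smul_eq_mul, inner_add_left, real_inner_smul_left] at this ⊢
  linarith

theorem convexConjugate_add_le_of_strongConvexOn {m : ℝ} (hm : 0 < m) {g gs : E → ℝ}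
    (hg : StrongConvexOn Set.univ m g)
    (hgs : ∀ z, IsLUB (Set.range fun s => ⟪s, z⟫_ℝ - g s) (gs z)) {z w : E}
    (hattain : g w + gs z = ⟪w, z⟫_ℝ) (u : E) :
    gs (z + u) ≤ gs z + ⟪w, u⟫_ℝ + ‖u‖ ^ 2 / (2 * m) := by
  have hmin : IsMinOn (fun s => g s - ⟪s, z⟫_ℝ) Set.univ w := fun s _ => by
    have := (hgs z).1 ⟨s, rfl⟩
    change g w - ⟪w, z⟫_ℝ ≤ g s - ⟪s, z⟫_ℝ
    linarith
  refine (hgs (z + u)).2 ?_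
  rintro _ ⟨s, rfl⟩
  have hgrowth := (hg.sub_inner z).add_sq_norm_sub_le_of_isMinOn trivial trivial hmin (x := s)
  have hcs : ⟪s - w, u⟫_ℝ ≤ ‖s - w‖ * ‖u‖ := real_inner_le_norm _ _
  have hamgm : ‖s - w‖ * ‖u‖ ≤ m / 2 * ‖s - w‖ ^ 2 + ‖u‖ ^ 2 / (2 * m) := by
    have : m / 2 * ‖s - w‖ ^ 2 + ‖u‖ ^ 2 / (2 * m) - ‖s - w‖ * ‖u‖
        = (m * ‖s - w‖ - ‖u‖) ^ 2 / (2 * m) := by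
      field_simp
      ring
    exact sub_nonneg.1 (this ▸ by positivity)
  simp only [inner_add_right, inner_sub_left] at hcs ⊢
  linarith

end StrongConvexity

theorem sum_apply_update_sub_sum {ι β M : Type*} [Fintype ι] [DecidableEq ι] [AddCommGroup M]
    (F : ι → β → M) (α : ι → β) (i : ι) (c : β) :
    ∑ j, F j (update α i c j) - ∑ j, F j (α j) = F i c - F i (α i) := by
  rw [← Finset.sum_sub_distrib, Finset.sum_eq_single i (fun j _ hj => by simp [update_of_ne hj])
    (by simp)]
  simp

noncomputable section DualObjective

variable {E : Type*} [NormedAddCommGroup E] [InnerProductSpace ℝ E] {n : ℕ}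

def dualPoint (lam : ℝ) (A : Fin n → E) (α : Fin n → ℝ) : E :=
  (1 / (lam * n)) • ∑ i, α i • A i

def primalObjective (φ : Fin n → ℝ → ℝ) (g : E → ℝ) (lam : ℝ) (A : Fin n → E) (u : E) : ℝ :=
  (1 / (n : ℝ)) * ∑ i, φ i ⟪A i, u⟫_ℝ + lam * g u

def dualObjective (φs : Fin n → ℝ → ℝ) (gs : E → ℝ) (lam : ℝ) (A : Fin n → E)
    (α : Fin n → ℝ) : ℝ :=
  -lam * gs (dualPoint lam A α) - (1 / (n : ℝ)) * ∑ i, φs i (-α i)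

variable {lam : ℝ} {A : Fin n → E} {α : Fin n → ℝ}

theorem dualPoint_update (i : Fin n) (δ : ℝ) :
    dualPoint lam A (update α i (α i + δ)) = dualPoint lam A α + (δ / (lam * n)) • A i := by
  rw [← sub_eq_iff_eq_add', dualPoint, dualPoint, ← smul_sub,
    sum_apply_update_sub_sum (fun j x => x • A j), ← sub_smul, add_sub_cancel_left, smul_smul,
    one_div_mul_eq_div]

theorem inner_dualPoint (w : E) :
    ⟪w, dualPoint lam A α⟫_ℝ = (1 / (lam * n)) * ∑ i, α i * ⟪A i, w⟫_ℝ := by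
  simp only [dualPoint, real_inner_smul_right, inner_sum, real_inner_comm w]

theorem primalObjective_sub_dualObjective (φ φs : Fin n → ℝ → ℝ) {g gs : E → ℝ} (hlam : lam ≠ 0)
    {w : E} (hattain : g w + gs (dualPoint lam A α) = ⟪w, dualPoint lam A α⟫_ℝ) :
    primalObjective φ g lam A w - dualObjective φs gs lam A α
      = (∑ i, (φ i ⟪A i, w⟫_ℝ + φs i (-α i) + α i * ⟪A i, w⟫_ℝ)) / n := by
  rw [inner_dualPoint] at hattain
  simp only [primalObjective, dualObjective, Finset.sum_add_distrib]
  have : lam * (1 / (lam * n)) = 1 / (n : ℝ) := by field_simp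
  linear_combination lam * hattain + (∑ i, α i * ⟪A i, w⟫_ℝ) * this

theorem dualObjective_update_sub_ge (φs : Fin n → ℝ → ℝ) {gs : E → ℝ} (hlam : 0 < lam) {w : E}
    (hsmooth : ∀ u, gs (dualPoint lam A α + u) ≤ gs (dualPoint lam A α) + ⟪w, u⟫_ℝ + ‖u‖ ^ 2 / 2)
    (i : Fin n) (δ : ℝ) :
    (φs i (-α i) + (-φs i (-(α i + δ)) - ⟪A i, w⟫_ℝ * δ - ‖A i‖ ^ 2 / (2 * lam * n) * δ ^ 2)) / n
      ≤ dualObjective φs gs lam A (update α i (α i + δ)) - dualObjective φs gs lam A α := by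
  have hstep := hsmooth ((δ / (lam * n)) • A i)
  rw [real_inner_smul_right, norm_smul, mul_pow, Real.norm_eq_abs, sq_abs, real_inner_comm] at hstep
  have hsum := sum_apply_update_sub_sum (fun j x => φs j (-x)) α i (α i + δ)
  rw [dualObjective, dualObjective, dualPoint_update]
  have hl : lam * (δ / (lam * n)) = δ / n := by field_simp
  have hq : lam * ((δ / (lam * n)) ^ 2 * ‖A i‖ ^ 2 / 2)
      = ‖A i‖ ^ 2 / (2 * lam * n) * δ ^ 2 / n := by
    field_simp
  linear_combination lam * hstep + (1 / (n : ℝ)) * hsum + ⟪A i, w⟫_ℝ * hl + hq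

end DualObjective

noncomputable section QuadraticLoss

def quadLoss (γ y x : ℝ) : ℝ := 1 / (2 * γ) * (x - y) ^ 2

def quadLossConj (γ y u : ℝ) : ℝ := y * u + γ * u ^ 2 / 2

variable {γ : ℝ}

theorem isGreatest_mul_sub_quadLoss (hγ : 0 < γ) (y u : ℝ) :
    IsGreatest (Set.range fun x => x * u - quadLoss γ y x) (quadLossConj γ y u) := by
  refine ⟨⟨y + γ * u, ?_⟩, ?_⟩
  · simp only [quadLoss, quadLossConj]
    field_simp
    ring
  · rintro _ ⟨x, rfl⟩
    have hsq : x * u - quadLoss γ y x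
        = quadLossConj γ y u - 1 / (2 * γ) * (x - y - γ * u) ^ 2 := by
      simp only [quadLoss, quadLossConj]
      field_simp
      ring
    simp only [hsq]
    linarith [show 0 ≤ 1 / (2 * γ) * (x - y - γ * u) ^ 2 by positivity]

theorem hasDerivAt_quadLoss (γ y x : ℝ) : HasDerivAt (quadLoss γ y) ((x - y) / γ) x := by
  refine ((((hasDerivAt_id x).sub_const y).pow 2).const_mul (1 / (2 * γ))).congr_deriv ?_
  simp only [id, Nat.cast_ofNat, Nat.add_one_sub_one, pow_one, mul_one]
  ring

theorem quadLoss_add_quadLossConj_neg (hγ : γ ≠ 0) (y x a : ℝ) :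
    quadLoss γ y x + quadLossConj γ y (-a) + a * x = γ / 2 * (a + (x - y) / γ) ^ 2 := by
  simp only [quadLoss, quadLossConj]
  field_simp
  ring

theorem quadLossConj_neg_sub_quadLossConj_neg (hγ : γ ≠ 0) {y x a κ : ℝ}
    (hκ : κ = a + (x - y) / γ) (c s : ℝ) :
    quadLossConj γ y (-a)
        + (-quadLossConj γ y (-(a + -(s * κ))) - x * -(s * κ) - c * (-(s * κ)) ^ 2)
      = κ ^ 2 * (γ * s - (γ / 2 + c) * s ^ 2) := by
  subst hκ
  simp only [quadLossConj]
  field_simp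
  ring

end QuadraticLoss

theorem sum_mul_sub_ge_of_coordinate_gain {ι : Type*} [Fintype ι] {κ p v G : ι → ℝ}
    {n lam gam : ℝ} (hn : n ≠ 0) (hlam : lam ≠ 0) (hp0 : ∀ i, 0 ≤ p i)
    (hpos : ∀ i, κ i ≠ 0 → 0 < p i)
    (hG : ∀ i s, κ i ^ 2 * (gam * s - (gam / 2 + v i / (2 * lam * n)) * s ^ 2) / n ≤ G i)
    (θ : ℝ) :
    ∑ i, p i * G i - θ * (gam / (2 * n) * ∑ i, κ i ^ 2) ≥
      -(θ / (2 * lam * n ^ 2)) *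
        ∑ i ∈ univ.filter (fun i => κ i ≠ 0),
          (θ * (v i + n * lam * gam) / p i - n * lam * gam) * κ i ^ 2 := by
  have hterm : ∀ i ∈ univ.filter (fun i => κ i ≠ 0),
      -(θ / (2 * lam * n ^ 2)) * ((θ * (v i + n * lam * gam) / p i - n * lam * gam) * κ i ^ 2)
        ≤ p i * G i - θ * (gam / (2 * n) * κ i ^ 2) := by
    intro i hi
    have hp : 0 < p i := hpos i (mem_filter.1 hi).2
    have hgain := mul_le_mul_of_nonneg_left (hG i (θ / p i)) hp.le
    have hid : p i * (κ i ^ 2 * (gam * (θ / p i) - (gam / 2 + v i / (2 * lam * n)) * (θ / p i) ^ 2) / n)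
        = -(θ / (2 * lam * n ^ 2)) * ((θ * (v i + n * lam * gam) / p i - n * lam * gam) * κ i ^ 2)
          + θ * (gam / (2 * n) * κ i ^ 2) := by
      field_simp
      ring
    linarith
  have hrest : ∀ i ∈ univ, i ∉ univ.filter (fun i => κ i ≠ 0) →
      0 ≤ p i * G i - θ * (gam / (2 * n) * κ i ^ 2) := by
    intro i _ hi
    have hκ : κ i = 0 := by simpa using hi
    have := hG i 0
    simp only [hκ, ne_eq, OfNat.ofNat_ne_zero, not_false_eq_true, zero_pow, zero_div,
      mul_zero, sub_zero] at this ⊢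
    exact mul_nonneg (hp0 i) this
  have hθsum : θ * (gam / (2 * n) * ∑ i, κ i ^ 2) = ∑ i, θ * (gam / (2 * n) * κ i ^ 2) := by
    rw [mul_sum, mul_sum]
  rw [ge_iff_le, hθsum, ← sum_sub_distrib, mul_sum]
  exact (sum_le_sum hterm).trans (sum_le_sum_of_subset_of_nonneg (filter_subset _ _) hrest)

theorem stmt17_general (n d : ℕ) (hn : 1 ≤ n)
    (A : Fin n → EuclideanSpace ℝ (Fin d))
    (v : Fin n → ℝ) (hv : ∀ i, v i = ‖A i‖ ^ 2)
    (lam gam : ℝ) (hlam : 0 < lam) (hgam : 0 < gam)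
    (g : EuclideanSpace ℝ (Fin d) → ℝ)
    (hg : ∀ w₁ w₂ : EuclideanSpace ℝ (Fin d), ∀ a : ℝ, 0 ≤ a → a ≤ 1 →
      g (a • w₁ + (1 - a) • w₂) ≤ a * g w₁ + (1 - a) * g w₂ - a * (1 - a) / 2 * ‖w₁ - w₂‖ ^ 2)
    (y : Fin n → ℝ)
    (φ φ' : Fin n → ℝ → ℝ)
    (hφ : ∀ i x, φ i x = 1 / (2 * gam) * (x - y i) ^ 2)
    (hφdiff : ∀ i x, HasDerivAt (φ i) (φ' i x) x)
    (φs : Fin n → ℝ → ℝ)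
    (hφs : ∀ i u, IsLUB (Set.range fun x : ℝ => x * u - φ i x) (φs i u))
    (gs : EuclideanSpace ℝ (Fin d) → ℝ)
    (hgs : ∀ z, IsLUB (Set.range fun s : EuclideanSpace ℝ (Fin d) => ⟪s, z⟫_ℝ - g s) (gs z))
    (P : EuclideanSpace ℝ (Fin d) → ℝ)
    (hP : ∀ u, P u = (1 / (n : ℝ)) * ∑ i, φ i ⟪A i, u⟫_ℝ + lam * g u)
    (D : (Fin n → ℝ) → ℝ)
    (hD : ∀ β : Fin n → ℝ,
      D β = -lam * gs ((1 / (lam * n)) • (∑ i, β i • A i)) - (1 / (n : ℝ)) * ∑ i, φs i (-β i))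
    (α : Fin n → ℝ)
    (abar : EuclideanSpace ℝ (Fin d))
    (habar : abar = (1 / (lam * n)) • (∑ i, α i • A i))
    (w : EuclideanSpace ℝ (Fin d))
    (hattain : g w + gs abar = ⟪w, abar⟫_ℝ)
    (κ : Fin n → ℝ) (hκ : ∀ i, κ i = α i + φ' i ⟪A i, w⟫_ℝ)
    (Δ : Fin n → ℝ)
    (hΔ : ∀ i, ∀ Δ' : ℝ,
      -φs i (-(α i + Δ')) - ⟪A i, w⟫_ℝ * Δ' - v i / (2 * lam * n) * Δ' ^ 2 ≤
      -φs i (-(α i + Δ i)) - ⟪A i, w⟫_ℝ * (Δ i) - v i / (2 * lam * n) * (Δ i) ^ 2)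
    (p : Fin n → ℝ) (hp0 : ∀ i, 0 ≤ p i)
    (hcoh : ∀ i, κ i ≠ 0 → 0 < p i)
    (θ : ℝ) :
    ∑ i, p i * (D (Function.update α i (α i + Δ i)) - D α) - θ * (P w - D α) ≥
      -(θ / (2 * lam * (n : ℝ) ^ 2)) *
        ∑ i ∈ Finset.univ.filter (fun i => κ i ≠ 0),
          (θ * (v i + n * lam * gam) / p i - n * lam * gam) * κ i ^ 2 := by
  obtain rfl : φ = fun i => quadLoss gam (y i) := funext fun i => funext (hφ i)
  obtain rfl : φs = fun i => quadLossConj gam (y i) := funext fun i => funext fun u =>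
    (hφs i u).unique (isGreatest_mul_sub_quadLoss hgam (y i) u).isLUB
  have hP' : P = primalObjective (fun i => quadLoss gam (y i)) g lam A := funext hP
  have hD' : D = dualObjective (fun i => quadLossConj gam (y i)) gs lam A := funext hD
  obtain rfl : abar = dualPoint lam A α := habar
  have hκ' : ∀ i, κ i = α i + (⟪A i, w⟫_ℝ - y i) / gam := fun i => by
    rw [hκ, (hφdiff i _).unique (hasDerivAt_quadLoss gam (y i) _)]
  have hg' : StrongConvexOn Set.univ 1 g := ⟨convex_univ, fun x _ x' _ a b ha hb hab => by
    obtain rfl : b = 1 - a := by linarith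
    have := hg x x' a ha (by linarith)
    simp only [smul_eq_mul]
    linarith⟩
  have hsmooth : ∀ u, gs (dualPoint lam A α + u) ≤
      gs (dualPoint lam A α) + ⟪w, u⟫_ℝ + ‖u‖ ^ 2 / 2 := by
    simpa using convexConjugate_add_le_of_strongConvexOn one_pos hg' hgs hattain
  have hgap : P w - D α = gam / (2 * n) * ∑ i, κ i ^ 2 := by
    rw [hP', hD', primalObjective_sub_dualObjective _ _ hlam.ne' hattain]
    simp only [quadLoss_add_quadLossConj_neg hgam.ne', ← hκ', ← mul_sum]
    ring
  have hgain : ∀ i s, κ i ^ 2 * (gam * s - (gam / 2 + v i / (2 * lam * n)) * s ^ 2) / n ≤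
      D (Function.update α i (α i + Δ i)) - D α := by
    intro i s
    rw [hD', ← quadLossConj_neg_sub_quadLossConj_neg hgam.ne' (hκ' i), hv]
    refine le_trans ?_ (dualObjective_update_sub_ge _ hlam hsmooth i (Δ i))
    gcongr (_ + ?_) / _
    simpa only [hv] using hΔ i _
  rw [hgap]
  exact sum_mul_sub_ge_of_coordinate_gain (Nat.cast_ne_zero.2 (by omega)) hlam.ne' hp0 hcoh hgain θ

/-- Lemma 3 of the paper: Suppose every loss is quadratic:
`φᵢ(x) = (1/(2γ))(x − yᵢ)²`. Let `p` be a probability vector with `pᵢ > 0` for every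
`i ∈ I = {i : κᵢ ≠ 0}`, and let `Δᵢ` maximize
`Δ ↦ −φᵢ*(−(αᵢ+Δ)) − (Aᵢᵀw)Δ − (vᵢ/(2λn))Δ²`. Then for EVERY `θ ∈ [0,∞)` (no upper
restriction by `min_{i∈I} pᵢ`):
`∑ᵢ pᵢ(D(α+Δᵢeᵢ) − D(α)) − θ(P(w) − D(α)) ≥
 −(θ/(2λn²))·∑_{i∈I} (θ(vᵢ+nλγ)/pᵢ − nλγ)κᵢ²`. -/
theorem stmt17 (n d : ℕ) (hn : 1 ≤ n) (hd : 1 ≤ d)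
    (A : Fin n → EuclideanSpace ℝ (Fin d))
    (v : Fin n → ℝ) (hv : ∀ i, v i = ‖A i‖ ^ 2)
    (lam gam : ℝ) (hlam : 0 < lam) (hgam : 0 < gam)
    (g : EuclideanSpace ℝ (Fin d) → ℝ)
    (hg : ∀ w₁ w₂ : EuclideanSpace ℝ (Fin d), ∀ a : ℝ, 0 ≤ a → a ≤ 1 →
      g (a • w₁ + (1 - a) • w₂) ≤ a * g w₁ + (1 - a) * g w₂ - a * (1 - a) / 2 * ‖w₁ - w₂‖ ^ 2)
    (y : Fin n → ℝ)
    (φ φ' : Fin n → ℝ → ℝ)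
    (hφ : ∀ i x, φ i x = 1 / (2 * gam) * (x - y i) ^ 2)
    (hφdiff : ∀ i x, HasDerivAt (φ i) (φ' i x) x)
    (φs : Fin n → ℝ → ℝ)
    (hφs : ∀ i u, IsLUB (Set.range fun x : ℝ => x * u - φ i x) (φs i u))
    (gs : EuclideanSpace ℝ (Fin d) → ℝ)
    (hgs : ∀ z, IsLUB (Set.range fun s : EuclideanSpace ℝ (Fin d) => ⟪s, z⟫_ℝ - g s) (gs z))
    (gs' : EuclideanSpace ℝ (Fin d) → EuclideanSpace ℝ (Fin d))
    (hgs' : ∀ z, HasGradientAt gs (gs' z) z)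
    (hgs'lip : LipschitzWith 1 gs')
    (P : EuclideanSpace ℝ (Fin d) → ℝ)
    (hP : ∀ u, P u = (1 / (n : ℝ)) * ∑ i, φ i ⟪A i, u⟫_ℝ + lam * g u)
    (D : (Fin n → ℝ) → ℝ)
    (hD : ∀ β : Fin n → ℝ,
      D β = -lam * gs ((1 / (lam * n)) • (∑ i, β i • A i)) - (1 / (n : ℝ)) * ∑ i, φs i (-β i))
    (α : Fin n → ℝ)
    (abar : EuclideanSpace ℝ (Fin d))
    (habar : abar = (1 / (lam * n)) • (∑ i, α i • A i))
    (w : EuclideanSpace ℝ (Fin d)) (hw : w = gs' abar)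
    (hattain : g w + gs abar = ⟪w, abar⟫_ℝ)
    (κ : Fin n → ℝ) (hκ : ∀ i, κ i = α i + φ' i ⟪A i, w⟫_ℝ)
    (Δ : Fin n → ℝ)
    (hΔ : ∀ i, ∀ Δ' : ℝ,
      -φs i (-(α i + Δ')) - ⟪A i, w⟫_ℝ * Δ' - v i / (2 * lam * n) * Δ' ^ 2 ≤
      -φs i (-(α i + Δ i)) - ⟪A i, w⟫_ℝ * (Δ i) - v i / (2 * lam * n) * (Δ i) ^ 2)
    (p : Fin n → ℝ) (hp0 : ∀ i, 0 ≤ p i) (hp1 : ∑ i, p i = 1)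
    (hcoh : ∀ i, κ i ≠ 0 → 0 < p i)
    (θ : ℝ) (hθ0 : 0 ≤ θ) :
    ∑ i, p i * (D (Function.update α i (α i + Δ i)) - D α) - θ * (P w - D α) ≥
      -(θ / (2 * lam * (n : ℝ) ^ 2)) *
        ∑ i ∈ Finset.univ.filter (fun i => κ i ≠ 0),
          (θ * (v i + n * lam * gam) / p i - n * lam * gam) * κ i ^ 2 :=
  stmt17_general n d hn A v hv lam gam hlam hgam g hg y φ φ' hφ hφdiff φs hφs gs hgs P hP D hD α
    abar habar w hattain κ hκ Δ hΔ p hp0 hcoh θ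
end
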